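/- arXiv:1901.06042 — 7 statements merged into one kernel-verified Lean document; each statement's English description precedes it below -/
import Mathlib

section
/- Every covering [3]-uniform hypergraph on n ≥ 4 vertices contains a Hamiltonian Berge path, i.e., a Berge path whose base vertex sequence consists of all n vertices. -/
/-- A hypergraph (given by its edge set `E`) on vertex type `V` is *covering* if
every pair of distinct vertices is contained in some hyperedge. -/
def IsCovering {V : Type*} (E : Finset (Finset V)) : Prop :=
  ∀ u v : V, u ≠ v → ∃ e ∈ E, u ∈ e ∧ v ∈ e

/-- A Berge path with `t` base vertices: `t` distinct vertices `v 0, …, v (t-1)`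
and `t - 1` distinct hyperedges `h 0, …, h (t-2)` of `E` with
`{v i, v (i+1)} ⊆ h i` for each `0 ≤ i ≤ t - 2`. -/
def HasBergePath {V : Type*} (E : Finset (Finset V)) (t : ℕ) : Prop :=
  ∃ (v : Fin t → V) (h : Fin (t - 1) → Finset V),
    Function.Injective v ∧ Function.Injective h ∧
      ∀ i : Fin (t - 1), h i ∈ E ∧
        v ⟨i.1, by have := i.2; omega⟩ ∈ h i ∧
        v ⟨i.1 + 1, by have := i.2; omega⟩ ∈ h i

section BergeAux

set_option linter.unusedSectionVars false

variable {V : Type*} [DecidableEq V]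

/-- ℕ-indexed version of a Berge path with `t` base vertices. -/
def IsGP (E : Finset (Finset V)) (v : ℕ → V) (h : ℕ → Finset V) (t : ℕ) : Prop :=
  (∀ i < t, ∀ j < t, v i = v j → i = j) ∧
  (∀ i, i + 1 < t → ∀ j, j + 1 < t → h i = h j → i = j) ∧
  (∀ i, i + 1 < t → h i ∈ E ∧ v i ∈ h i ∧ v (i + 1) ∈ h i)

/-- Existence version. -/
def GP (E : Finset (Finset V)) (t : ℕ) : Prop := ∃ v h, IsGP E v h t

lemma bp_card_three {a b c : V} (hab : a ≠ b) (hac : a ≠ c) (hbc : b ≠ c) :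
    ({a, b, c} : Finset V).card = 3 := by
  rw [Finset.card_insert_of_notMem (by simp [hab, hac]),
      Finset.card_insert_of_notMem (by simp [hbc]), Finset.card_singleton]

lemma bp_four_le_card {e : Finset V} {a b c d : V} (ha : a ∈ e) (hb : b ∈ e) (hc : c ∈ e)
    (hd : d ∈ e) (hab : a ≠ b) (hac : a ≠ c) (had : a ≠ d) (hbc : b ≠ c) (hbd : b ≠ d)
    (hcd : c ≠ d) : 4 ≤ e.card := by
  have hsub : ({a, b, c, d} : Finset V) ⊆ e := by
    intro x hx
    simp only [Finset.mem_insert, Finset.mem_singleton] at hx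
    rcases hx with rfl | rfl | rfl | rfl <;> assumption
  have hcard : ({a, b, c, d} : Finset V).card = 4 := by
    rw [Finset.card_insert_of_notMem (by simp [hab, hac, had]),
        Finset.card_insert_of_notMem (by simp [hbc, hbd]),
        Finset.card_insert_of_notMem (by simp [hcd]), Finset.card_singleton]
  calc 4 = ({a, b, c, d} : Finset V).card := hcard.symm
    _ ≤ e.card := Finset.card_le_card hsub

/-- Reversing a Berge path. -/
lemma isGP_reverse {E : Finset (Finset V)} {v : ℕ → V} {h : ℕ → Finset V} {t : ℕ}
    (H : IsGP E v h t) :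
    IsGP E (fun i => v (t - 1 - i)) (fun j => h (t - 2 - j)) t := by
  obtain ⟨hv, hh, he⟩ := H
  refine ⟨?_, ?_, ?_⟩
  · intro i hi j hj hij
    have := hv (t - 1 - i) (by omega) (t - 1 - j) (by omega) hij
    omega
  · intro i hi j hj hij
    have := hh (t - 2 - i) (by omega) (t - 2 - j) (by omega) hij
    omega
  · intro i hi
    have h1 : (t - 2 - i) + 1 < t := by omega
    obtain ⟨hE, hm1, hm2⟩ := he (t - 2 - i) h1
    refine ⟨hE, ?_, ?_⟩
    · have hx : t - 1 - i = (t - 2 - i) + 1 := by omega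
      simp only [hx]; exact hm2
    · have hx : t - 1 - (i + 1) = t - 2 - i := by omega
      simp only [hx]; exact hm1

/-- Extending a Berge path at the back end by a fresh vertex `u` using a fresh edge `e`. -/
lemma isGP_extend {E : Finset (Finset V)} {v : ℕ → V} {h : ℕ → Finset V} {t : ℕ}
    (ht : 2 ≤ t) (H : IsGP E v h t)
    {u : V} (hu : ∀ i < t, v i ≠ u) {e : Finset V} (heE : e ∈ E)
    (hve : v (t - 1) ∈ e) (hue : u ∈ e) (hnew : ∀ j, j + 1 < t → h j ≠ e) :
    GP E (t + 1) := by
  obtain ⟨hv, hh, hedge⟩ := H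
  refine ⟨fun i => if i = t then u else v i, fun j => if j = t - 1 then e else h j,
    ?_, ?_, ?_⟩
  · intro i hi j hj hij
    by_cases hit : i = t
    · by_cases hjt : j = t
      · rw [hit, hjt]
      · simp only [if_pos hit, if_neg hjt] at hij
        exact absurd hij.symm (hu j (by omega))
    · by_cases hjt : j = t
      · simp only [if_neg hit, if_pos hjt] at hij
        exact absurd hij (hu i (by omega))
      · simp only [if_neg hit, if_neg hjt] at hij
        exact hv i (by omega) j (by omega) hij
  · intro i hi j hj hij
    by_cases hit : i = t - 1
    · by_cases hjt : j = t - 1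
      · rw [hit, hjt]
      · simp only [if_pos hit, if_neg hjt] at hij
        exact absurd hij.symm (hnew j (by omega))
    · by_cases hjt : j = t - 1
      · simp only [if_neg hit, if_pos hjt] at hij
        exact absurd hij (hnew i (by omega))
      · simp only [if_neg hit, if_neg hjt] at hij
        exact hh i (by omega) j (by omega) hij
  · intro i hi
    by_cases hit : i = t - 1
    · have h1 : i ≠ t := by omega
      have h2 : i + 1 = t := by omega
      refine ⟨by simp only [if_pos hit]; exact heE, ?_, ?_⟩
      · simp only [if_pos hit, if_neg h1]
        rw [← hit] at hve
        exact hve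
      · simp only [if_pos hit, h2, if_pos rfl]; exact hue
    · have h1 : i + 1 < t := by omega
      obtain ⟨hE, hm1, hm2⟩ := hedge i h1
      have h2 : i ≠ t := by omega
      have h3 : i + 1 ≠ t := by omega
      refine ⟨by simp only [if_neg hit]; exact hE, ?_, ?_⟩
      · simp only [if_neg hit, if_neg h2]; exact hm1
      · simp only [if_neg hit, if_neg h3]; exact hm2

/-- Replacing the last vertex of a Berge path by a fresh vertex `u`,
provided `u` belongs to the last edge. -/
lemma isGP_update_last {E : Finset (Finset V)} {v : ℕ → V} {h : ℕ → Finset V} {t : ℕ}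
    (ht : 2 ≤ t) (H : IsGP E v h t) {u : V}
    (hu : ∀ i < t, v i ≠ u) (hmem : u ∈ h (t - 2)) :
    IsGP E (fun i => if i = t - 1 then u else v i) h t := by
  obtain ⟨hv, hh, hedge⟩ := H
  refine ⟨?_, hh, ?_⟩
  · intro i hi j hj hij
    rcases eq_or_ne i (t - 1) with rfl | hit
    · rcases eq_or_ne j (t - 1) with rfl | hjt
      · rfl
      · simp only [if_pos rfl, if_neg hjt] at hij
        exact absurd hij.symm (hu j (by omega))
    · rcases eq_or_ne j (t - 1) with rfl | hjt
      · simp only [if_neg hit, if_pos rfl] at hij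
        exact absurd hij (hu i (by omega))
      · simp only [if_neg hit, if_neg hjt] at hij
        exact hv i (by omega) j (by omega) hij
  · intro i hi
    rcases eq_or_ne i (t - 2) with rfl | hit
    · obtain ⟨hE, hm1, hm2⟩ := hedge (t - 2) hi
      have h1 : t - 2 ≠ t - 1 := by omega
      have h2 : t - 2 + 1 = t - 1 := by omega
      refine ⟨hE, ?_, ?_⟩
      · simp only [if_neg h1]; exact hm1
      · simp only [h2, if_pos rfl]; exact hmem
    · obtain ⟨hE, hm1, hm2⟩ := hedge i hi
      have h1 : i ≠ t - 1 := by omega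
      have h2 : i + 1 ≠ t - 1 := by omega
      refine ⟨hE, ?_, ?_⟩
      · simp only [if_neg h1]; exact hm1
      · simp only [if_neg h2]; exact hm2

/-- If an edge `e` covering the pair `{v (t-1), u}` (with `u` off the path) coincides with
some edge of the path, then it is the last edge and equals `{v (t-2), v (t-1), u}`. -/
lemma bp_stuck_eq {E : Finset (Finset V)} {v : ℕ → V} {h : ℕ → Finset V} {t : ℕ}
    (hunif : ∀ e ∈ E, 1 ≤ e.card ∧ e.card ≤ 3)
    (ht : 2 ≤ t) (H : IsGP E v h t) {u : V} (hu : ∀ i < t, v i ≠ u)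
    {e : Finset V} (heE : e ∈ E) (hve : v (t - 1) ∈ e) (hue : u ∈ e)
    {j : ℕ} (hj : j + 1 < t) (hje : h j = e) :
    h (t - 2) = {v (t - 2), v (t - 1), u} := by
  obtain ⟨hv, hh, hedge⟩ := H
  obtain ⟨hE, hm1, hm2⟩ := hedge j hj
  rw [hje] at hm1 hm2
  have hne : v (t - 1) = v j ∨ v (t - 1) = v (j + 1) := by
    by_contra hcon
    push_neg at hcon
    have h4 : 4 ≤ e.card := by
      refine bp_four_le_card hm1 hm2 hve hue ?_ ?_ ?_ ?_ ?_ ?_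
      · intro hx
        have := hv j (by omega) (j + 1) (by omega) hx
        omega
      · intro hx; exact hcon.1 hx.symm
      · exact hu j (by omega)
      · intro hx; exact hcon.2 hx.symm
      · exact hu (j + 1) (by omega)
      · exact hu (t - 1) (by omega)
    have := (hunif e heE).2
    omega
  have hjt : j = t - 2 := by
    rcases hne with hx | hx
    · have := hv (t - 1) (by omega) j (by omega) hx
      omega
    · have := hv (t - 1) (by omega) (j + 1) (by omega) hx
      omega
  subst hjt
  rw [hje]
  have hsub : ({v (t - 2), v (t - 1), u} : Finset V) ⊆ e := by
    intro x hx
    simp only [Finset.mem_insert, Finset.mem_singleton] at hx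
    rcases hx with rfl | rfl | rfl
    · have hx2 : t - 2 + 1 = t - 1 := by omega
      rw [hx2] at hm2
      exact hm1
    · exact hve
    · exact hue
  have hd1 : v (t - 2) ≠ v (t - 1) := by
    intro hx
    have := hv (t - 2) (by omega) (t - 1) (by omega) hx
    omega
  have hd2 : v (t - 2) ≠ u := hu (t - 2) (by omega)
  have hd3 : v (t - 1) ≠ u := hu (t - 1) (by omega)
  have hcard : ({v (t - 2), v (t - 1), u} : Finset V).card = 3 := bp_card_three hd1 hd2 hd3
  exact (Finset.eq_of_subset_of_card_le hsub (by rw [hcard]; exact (hunif e heE).2)).symm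

variable [Fintype V]

lemma bp_exists_unused {v : ℕ → V} {t : ℕ} (h : t < Fintype.card V) :
    ∃ u : V, ∀ i < t, v i ≠ u := by
  by_contra hcon
  push_neg at hcon
  have hsub : (Finset.univ : Finset V) ⊆ (Finset.range t).image v := by
    intro u _
    obtain ⟨i, hi, hiu⟩ := hcon u
    exact Finset.mem_image.2 ⟨i, Finset.mem_range.2 hi, hiu⟩
  have h1 := Finset.card_le_card hsub
  rw [Finset.card_univ] at h1
  have h2 : ((Finset.range t).image v).card ≤ t :=
    le_trans Finset.card_image_le (by simp)
  omega

lemma bp_exists_two_unused {v : ℕ → V} {t : ℕ} (h : t + 2 ≤ Fintype.card V) :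
    ∃ u u', u ≠ u' ∧ (∀ i < t, v i ≠ u) ∧ (∀ i < t, v i ≠ u') := by
  classical
  set s : Finset V := Finset.univ \ (Finset.range t).image v with hs
  have h1 : ((Finset.range t).image v).card ≤ t :=
    le_trans Finset.card_image_le (by simp)
  have h2 : s.card = Fintype.card V - ((Finset.range t).image v).card := by
    rw [hs, Finset.card_sdiff_of_subset (Finset.subset_univ _), Finset.card_univ]
  have hcard : 1 < s.card := by omega
  obtain ⟨u, hu, u', hu', huu⟩ := Finset.one_lt_card.1 hcard
  have hnmem : ∀ w ∈ s, ∀ i < t, v i ≠ w := by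
    intro w hw i hi heq
    rw [hs, Finset.mem_sdiff] at hw
    exact hw.2 (Finset.mem_image.2 ⟨i, Finset.mem_range.2 hi, heq⟩)
  exact ⟨u, u', huu, hnmem u hu, hnmem u' hu'⟩

/-- The extension step: any Berge path missing at least two vertices can be extended. -/
lemma gp_step {E : Finset (Finset V)}
    (hunif : ∀ e ∈ E, 1 ≤ e.card ∧ e.card ≤ 3) (hcov : IsCovering E)
    {t : ℕ} (ht : 2 ≤ t) (htn : t + 2 ≤ Fintype.card V) (hGP : GP E t) :
    GP E (t + 1) := by
  obtain ⟨v, h, H⟩ := hGP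
  obtain ⟨u, u', huu, hu, hu'⟩ := bp_exists_two_unused (v := v) htn
  by_cases Hu : ∃ e ∈ E, v (t - 1) ∈ e ∧ u ∈ e ∧ ∀ j, j + 1 < t → h j ≠ e
  · obtain ⟨e, he, h1, h2, h3⟩ := Hu
    exact isGP_extend ht H hu he h1 h2 h3
  by_cases Hu' : ∃ e ∈ E, v (t - 1) ∈ e ∧ u' ∈ e ∧ ∀ j, j + 1 < t → h j ≠ e
  · obtain ⟨e, he, h1, h2, h3⟩ := Hu'
    exact isGP_extend ht H hu' he h1 h2 h3
  exfalso
  push_neg at Hu Hu'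
  obtain ⟨e₁, he₁, hv₁, hu₁⟩ := hcov (v (t - 1)) u (hu (t - 1) (by omega))
  obtain ⟨j₁, hj₁, hje₁⟩ := Hu e₁ he₁ hv₁ hu₁
  have hR₁ := bp_stuck_eq hunif ht H hu he₁ hv₁ hu₁ hj₁ hje₁
  obtain ⟨e₂, he₂, hv₂, hu₂⟩ := hcov (v (t - 1)) u' (hu' (t - 1) (by omega))
  obtain ⟨j₂, hj₂, hje₂⟩ := Hu' e₂ he₂ hv₂ hu₂
  have hR₂ := bp_stuck_eq hunif ht H hu' he₂ hv₂ hu₂ hj₂ hje₂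
  rw [hR₁] at hR₂
  have : u ∈ ({v (t - 2), v (t - 1), u'} : Finset V) := by
    rw [← hR₂]
    simp
  simp only [Finset.mem_insert, Finset.mem_singleton] at this
  rcases this with hx | hx | hx
  · exact hu (t - 2) (by omega) hx.symm
  · exact hu (t - 1) (by omega) hx.symm
  · exact huu hx

/-- The endgame: a Berge path missing exactly one vertex yields a Hamiltonian Berge path. -/
lemma gp_last {E : Finset (Finset V)}
    (hunif : ∀ e ∈ E, 1 ≤ e.card ∧ e.card ≤ 3) (hcov : IsCovering E)
    {t : ℕ} (ht : 3 ≤ t) (htn : t + 1 = Fintype.card V) (hGP : GP E t) :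
    GP E (t + 1) := by
  have ht2 : 2 ≤ t := by omega
  obtain ⟨v, h, H⟩ := hGP
  obtain ⟨u, hu⟩ := bp_exists_unused (v := v) (t := t) (by omega)
  -- try to extend at the back
  by_cases Hu : ∃ e ∈ E, v (t - 1) ∈ e ∧ u ∈ e ∧ ∀ j, j + 1 < t → h j ≠ e
  · obtain ⟨e, he, h1, h2, h3⟩ := Hu
    exact isGP_extend ht2 H hu he h1 h2 h3
  push_neg at Hu
  obtain ⟨e₁, he₁, hv₁, hu₁⟩ := hcov (v (t - 1)) u (hu (t - 1) (by omega))
  obtain ⟨j₁, hj₁, hje₁⟩ := Hu e₁ he₁ hv₁ hu₁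
  have hR : h (t - 2) = {v (t - 2), v (t - 1), u} :=
    bp_stuck_eq hunif ht2 H hu he₁ hv₁ hu₁ hj₁ hje₁
  -- try to extend at the front (via reversal)
  have HR : IsGP E (fun i => v (t - 1 - i)) (fun j => h (t - 2 - j)) t := isGP_reverse H
  have huR : ∀ i < t, (fun i => v (t - 1 - i)) i ≠ u := fun i hi => hu (t - 1 - i) (by omega)
  by_cases Hu2 : ∃ e ∈ E, (fun i => v (t - 1 - i)) (t - 1) ∈ e ∧ u ∈ e ∧
      ∀ j, j + 1 < t → (fun j => h (t - 2 - j)) j ≠ e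
  · obtain ⟨e, he, h1, h2, h3⟩ := Hu2
    exact isGP_extend ht2 HR huR he h1 h2 h3
  push_neg at Hu2
  have hvR : (fun i => v (t - 1 - i)) (t - 1) = v 0 := by
    simp only []
    congr 1
    omega
  obtain ⟨e₂, he₂, hv₂, hu₂⟩ := hcov ((fun i => v (t - 1 - i)) (t - 1)) u
    (huR (t - 1) (by omega))
  obtain ⟨j₂, hj₂, hje₂⟩ := Hu2 e₂ he₂ hv₂ hu₂
  have hL' := bp_stuck_eq hunif ht2 HR huR he₂ hv₂ hu₂ hj₂ hje₂
  have hL : h 0 = {v 1, v 0, u} := by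
    have e1 : t - 2 - (t - 2) = 0 := by omega
    have e2 : t - 1 - (t - 2) = 1 := by omega
    have e3 : t - 1 - (t - 1) = 0 := by omega
    simpa only [e1, e2, e3] using hL'
  -- replace the last vertex by u
  have hmem : u ∈ h (t - 2) := by rw [hR]; simp
  have H' : IsGP E (fun i => if i = t - 1 then u else v i) h t :=
    isGP_update_last ht2 H hu hmem
  -- reverse the updated path
  have H'' : IsGP E (fun i => (fun i => if i = t - 1 then u else v i) (t - 1 - i))
      (fun j => h (t - 2 - j)) t := isGP_reverse H'
  -- append v (t-1) at the back using a cover of {v 0, v (t-1)}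
  have hne0 : v 0 ≠ v (t - 1) := by
    intro heq
    have := H.1 0 (by omega) (t - 1) (by omega) heq
    omega
  obtain ⟨estar, heE, hv0, hvt⟩ := hcov (v 0) (v (t - 1)) hne0
  have hw : ∀ i < t, (fun i => (fun i => if i = t - 1 then u else v i) (t - 1 - i)) i
      ≠ v (t - 1) := by
    intro i hi
    simp only []
    rcases eq_or_ne (t - 1 - i) (t - 1) with hx | hx
    · rw [if_pos hx]
      exact fun heq => hu (t - 1) (by omega) heq.symm
    · rw [if_neg hx]
      intro heq
      have := H.1 (t - 1 - i) (by omega) (t - 1) (by omega) heq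
      omega
  have hv''t : (fun i => (fun i => if i = t - 1 then u else v i) (t - 1 - i)) (t - 1)
      = v 0 := by
    simp only []
    have e3 : t - 1 - (t - 1) = 0 := by omega
    rw [e3, if_neg (by omega)]
  have hnew : ∀ j, j + 1 < t → (fun j => h (t - 2 - j)) j ≠ estar := by
    intro j hj heq
    simp only [] at heq
    set j' := t - 2 - j with hj'def
    have hj' : j' + 1 < t := by omega
    obtain ⟨hE', hm1, hm2⟩ := H.2.2 j' hj'
    rw [heq] at hm1 hm2
    -- now v j' ∈ estar, v (j'+1) ∈ estar, v 0 ∈ estar, v (t-1) ∈ estar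
    rcases eq_or_ne j' 0 with hj0 | hj0
    · -- estar = h 0 = {v 1, v 0, u}, contains v (t-1) : contradiction
      rw [hj0] at heq
      rw [← heq, hL] at hvt
      simp only [Finset.mem_insert, Finset.mem_singleton] at hvt
      rcases hvt with hx | hx | hx
      · have := H.1 (t - 1) (by omega) 1 (by omega) hx
        omega
      · have := H.1 (t - 1) (by omega) 0 (by omega) hx
        omega
      · exact hu (t - 1) (by omega) hx
    rcases eq_or_ne j' (t - 2) with hjt | hjt
    · -- estar = h (t-2) = {v (t-2), v (t-1), u}, contains v 0 : contradiction
      rw [hjt] at heq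
      rw [← heq, hR] at hv0
      simp only [Finset.mem_insert, Finset.mem_singleton] at hv0
      rcases hv0 with hx | hx | hx
      · have := H.1 0 (by omega) (t - 2) (by omega) hx
        omega
      · have := H.1 0 (by omega) (t - 1) (by omega) hx
        omega
      · exact hu 0 (by omega) hx
    · -- middle edge: four distinct vertices in estar
      have h4 : 4 ≤ estar.card := by
        refine bp_four_le_card hm1 hm2 hv0 hvt ?_ ?_ ?_ ?_ ?_ ?_
        · intro hx
          have := H.1 j' (by omega) (j' + 1) (by omega) hx
          omega
        · intro hx
          have := H.1 j' (by omega) 0 (by omega) hx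
          omega
        · intro hx
          have := H.1 j' (by omega) (t - 1) (by omega) hx
          omega
        · intro hx
          have := H.1 (j' + 1) (by omega) 0 (by omega) hx
          omega
        · intro hx
          have := H.1 (j' + 1) (by omega) (t - 1) (by omega) hx
          omega
        · exact hne0
      have := (hunif estar heE).2
      omega
  exact isGP_extend ht2 H'' hw heE (by rw [hv''t]; exact hv0) hvt hnew

end BergeAux

/-- Every covering [3]-uniform hypergraph on `n ≥ 4` vertices contains a
Hamiltonian Berge path (a Berge path with all `n` vertices as base vertices). -/
theorem covering_three_graph_hamiltonian_berge_path
    {V : Type*} [Fintype V] [DecidableEq V] (E : Finset (Finset V))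
    (hn : 4 ≤ Fintype.card V)
    (hunif : ∀ e ∈ E, 1 ≤ e.card ∧ e.card ≤ 3)
    (hcov : IsCovering E) :
    HasBergePath E (Fintype.card V) := by
  classical
  -- a Berge path on two vertices
  have hGP2 : GP E 2 := by
    obtain ⟨a, b, hab⟩ := Fintype.exists_pair_of_one_lt_card (α := V) (by omega)
    obtain ⟨e, he, ha, hb⟩ := hcov a b hab
    refine ⟨fun i => if i = 0 then a else b, fun _ => e, ?_, ?_, ?_⟩
    · intro i hi j hj hij
      rcases eq_or_ne i 0 with rfl | hi0
      · rcases eq_or_ne j 0 with rfl | hj0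
        · rfl
        · simp only [if_pos rfl, if_neg hj0] at hij
          exact absurd hij hab
      · rcases eq_or_ne j 0 with rfl | hj0
        · simp only [if_neg hi0, if_pos rfl] at hij
          exact absurd hij.symm hab
        · omega
    · intro i hi j hj _
      omega
    · intro i hi
      have hi0 : i = 0 := by omega
      subst hi0
      refine ⟨he, ?_, ?_⟩
      · simp only [if_pos rfl]; exact ha
      · simp only [if_neg (by omega : (0 : ℕ) + 1 ≠ 0)]; exact hb
  -- build up to a path on (card V - 1) vertices
  have hchain : ∀ t, 2 ≤ t → t ≤ Fintype.card V - 1 → GP E t := by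
    intro t
    induction t with
    | zero => omega
    | succ s ih =>
      intro h2 hle
      rcases eq_or_lt_of_le h2 with heq | hlt
      · exact heq ▸ hGP2
      · have hs2 : 2 ≤ s := by omega
        exact gp_step hunif hcov hs2 (by omega) (ih hs2 (by omega))
  have hGPn1 : GP E (Fintype.card V - 1) := hchain _ (by omega) le_rfl
  have hGPn' : GP E (Fintype.card V - 1 + 1) :=
    gp_last hunif hcov (by omega) (by omega) hGPn1
  have hEq : Fintype.card V - 1 + 1 = Fintype.card V := by omega
  rw [hEq] at hGPn'
  -- convert to the `Fin`-indexed statement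
  obtain ⟨v, h, hv, hh, he⟩ := hGPn'
  refine ⟨fun i => v i.1, fun j => h j.1, ?_, ?_, ?_⟩
  · intro i j hij
    exact Fin.ext (hv i.1 i.2 j.1 j.2 hij)
  · intro i j hij
    have hi := i.2
    have hj := j.2
    exact Fin.ext (hh i.1 (by omega) j.1 (by omega) hij)
  · intro i
    have hi := i.2
    exact he i.1 (by omega)
end

section
/- Every covering [3]-uniform hypergraph on n ≥ 4 vertices contains a Berge triangle, i.e., a Berge cycle of length 3. -/
/-- A Berge cycle of length `t`: `t` distinct vertices `v 0, …, v (t-1)` and `t`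
distinct hyperedges `h 0, …, h (t-1)` of `E` with `{v i, v (i+1)} ⊆ h i`,
indices taken modulo `t`. -/
def HasBergeCycle {V : Type*} (E : Finset (Finset V)) (t : ℕ) : Prop :=
  ∃ (v : Fin t → V) (h : Fin t → Finset V),
    Function.Injective v ∧ Function.Injective h ∧
      ∀ i : Fin t, h i ∈ E ∧ v i ∈ h i ∧
        v ⟨(i.1 + 1) % t, Nat.mod_lt _ (by have := i.2; omega)⟩ ∈ h i

lemma mk_triangle {V : Type*} [DecidableEq V] (E : Finset (Finset V))
    (a b c : V) (hab : a ≠ b) (hbc : b ≠ c) (hca : c ≠ a)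
    (h1 h2 h3 : Finset V) (m1 : h1 ∈ E) (m2 : h2 ∈ E) (m3 : h3 ∈ E)
    (d12 : h1 ≠ h2) (d13 : h1 ≠ h3) (d23 : h2 ≠ h3)
    (ha1 : a ∈ h1) (hb1 : b ∈ h1) (hb2 : b ∈ h2) (hc2 : c ∈ h2)
    (hc3 : c ∈ h3) (ha3 : a ∈ h3) : HasBergeCycle E 3 := by
  refine ⟨![a,b,c], ![h1,h2,h3], ?_, ?_, ?_⟩
  · intro i j hij
    fin_cases i <;> fin_cases j <;> simp_all
  · intro i j hij
    fin_cases i <;> fin_cases j <;> simp_all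
  · intro i; fin_cases i <;> simp_all

lemma triple_mem {V : Type*} [DecidableEq V] (E : Finset (Finset V))
    (hunif : ∀ e ∈ E, 1 ≤ e.card ∧ e.card ≤ 3)
    (a b c : V) (hab : a ≠ b) (hbc : b ≠ c) (hca : c ≠ a)
    (e : Finset V) (he : e ∈ E) (ha : a ∈ e) (hb : b ∈ e) (hc : c ∈ e) :
    e = ({a, b, c} : Finset V) := by
  have hsub : ({a, b, c} : Finset V) ⊆ e := by
    intro x hx
    simp only [Finset.mem_insert, Finset.mem_singleton] at hx
    rcases hx with rfl | rfl | rfl <;> assumption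
  have hcard : ({a, b, c} : Finset V).card = 3 := by
    rw [Finset.card_insert_of_notMem (by simp [hab, hca.symm]),
      Finset.card_insert_of_notMem (by simp [hbc]), Finset.card_singleton]
  exact (Finset.eq_of_subset_of_card_le hsub (by rw [hcard]; exact (hunif e he).2)).symm

lemma triple_case {V : Type*} [DecidableEq V] (E : Finset (Finset V))
    (hunif : ∀ e ∈ E, 1 ≤ e.card ∧ e.card ≤ 3) (hcov : IsCovering E)
    (a b c : V) (hab : a ≠ b) (hbc : b ≠ c) (hca : c ≠ a) :
    HasBergeCycle E 3 ∨ ({a, b, c} : Finset V) ∈ E := by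
  obtain ⟨e1, m1, ha1, hb1⟩ := hcov a b hab
  obtain ⟨e2, m2, hb2, hc2⟩ := hcov b c hbc
  obtain ⟨e3, m3, hc3, ha3⟩ := hcov c a hca
  by_cases h12 : e1 = e2
  · right; rw [← triple_mem E hunif a b c hab hbc hca e1 m1 ha1 hb1 (h12 ▸ hc2)]; exact m1
  by_cases h13 : e1 = e3
  · right; rw [← triple_mem E hunif a b c hab hbc hca e1 m1 ha1 hb1 (h13 ▸ hc3)]; exact m1
  by_cases h23 : e2 = e3
  · right; rw [← triple_mem E hunif a b c hab hbc hca e2 m2 (h23 ▸ ha3) hb2 hc2]; exact m2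
  · exact Or.inl (mk_triangle E a b c hab hbc hca e1 e2 e3 m1 m2 m3 h12 h13 h23
      ha1 hb1 hb2 hc2 hc3 ha3)

/-- Every covering [3]-uniform hypergraph on `n ≥ 4` vertices contains a Berge
triangle, i.e. a Berge cycle of length 3. -/
theorem covering_three_graph_berge_triangle
    {V : Type*} [Fintype V] [DecidableEq V] (E : Finset (Finset V))
    (hn : 4 ≤ Fintype.card V)
    (hunif : ∀ e ∈ E, 1 ≤ e.card ∧ e.card ≤ 3)
    (hcov : IsCovering E) :
    HasBergeCycle E 3 := by
  obtain ⟨f⟩ := Function.Embedding.nonempty_of_card_le (α := Fin 4) (β := V)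
    (by simpa using hn)
  set a := f 0; set b := f 1; set c := f 2; set d := f 3
  have hab : a ≠ b := fun h => by simpa using f.injective h
  have hbc : b ≠ c := fun h => by simpa using f.injective h
  have hca : c ≠ a := fun h => by simpa using f.injective h
  have had : a ≠ d := fun h => by simpa using f.injective h
  have hbd : b ≠ d := fun h => by simpa using f.injective h
  have hcd : c ≠ d := fun h => by simpa using f.injective h
  rcases triple_case E hunif hcov a b d hab hbd had.symm with t | e1
  · exact t
  rcases triple_case E hunif hcov b c d hbc hcd hbd.symm with t | e2
  · exact t
  rcases triple_case E hunif hcov c a d hca had hcd.symm with t | e3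
  · exact t
  refine mk_triangle E a b c hab hbc hca {a,b,d} {b,c,d} {c,a,d} e1 e2 e3 ?_ ?_ ?_
    (by simp) (by simp) (by simp) (by simp) (by simp) (by simp)
  · intro h
    have : a ∈ ({b,c,d} : Finset V) := h ▸ (by simp : a ∈ ({a,b,d} : Finset V))
    simp [hab, hca.symm, had] at this
  · intro h
    have : b ∈ ({c,a,d} : Finset V) := h ▸ (by simp : b ∈ ({a,b,d} : Finset V))
    simp [hbc, hab.symm, hbd] at this
  · intro h
    have : b ∈ ({c,a,d} : Finset V) := h ▸ (by simp : b ∈ ({b,c,d} : Finset V))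
    simp [hbc, hab.symm, hbd] at this
end

section
/- Every covering [3]-uniform hypergraph on n ≥ 6 vertices contains a Berge cycle of length 4. -/
open Finset

/-- Choice of a hyperedge containing a given set. -/
noncomputable def pickE {V : Type*} [DecidableEq V] (E : Finset (Finset V)) (P : Finset V) :
    Finset V :=
  if h : ∃ e ∈ E, P ⊆ e then h.choose else ∅

lemma pickE_spec {V : Type*} [DecidableEq V] {E : Finset (Finset V)} {P : Finset V}
    (h : ∃ e ∈ E, P ⊆ e) : pickE E P ∈ E ∧ P ⊆ pickE E P := by
  rw [pickE, dif_pos h]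
  exact ⟨h.choose_spec.1, h.choose_spec.2⟩

/-- The chosen edge covering the pair `{u, v}`. -/
noncomputable def pe {V : Type*} [DecidableEq V] (E : Finset (Finset V)) (u v : V) : Finset V :=
  pickE E {u, v}

lemma pe_comm {V : Type*} [DecidableEq V] (E : Finset (Finset V)) (u v : V) :
    pe E u v = pe E v u := by
  rw [pe, pe, Finset.pair_comm]

lemma pe_spec {V : Type*} [DecidableEq V] {E : Finset (Finset V)} (hcov : IsCovering E)
    {u v : V} (h : u ≠ v) : pe E u v ∈ E ∧ u ∈ pe E u v ∧ v ∈ pe E u v := by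
  obtain ⟨e, he, hu, hv⟩ := hcov u v h
  have hex : ∃ e ∈ E, ({u, v} : Finset V) ⊆ e := ⟨e, he, by
    intro x hx
    rcases Finset.mem_insert.mp hx with rfl | hx
    · exact hu
    · rcases Finset.mem_singleton.mp hx with rfl
      exact hv⟩
  obtain ⟨h1, h2⟩ := pickE_spec hex
  exact ⟨h1, h2 (Finset.mem_insert_self _ _), h2 (Finset.mem_insert_of_mem (Finset.mem_singleton_self _))⟩

/-- No hyperedge of cardinality ≤ 3 contains four distinct vertices. -/
lemma no4 {V : Type*} [DecidableEq V] {E : Finset (Finset V)}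
    (hunif : ∀ e ∈ E, 1 ≤ e.card ∧ e.card ≤ 3) {e : Finset V} (he : e ∈ E)
    {a b c d : V} (ha : a ∈ e) (hb : b ∈ e) (hc : c ∈ e) (hd : d ∈ e)
    (hab : a ≠ b) (hac : a ≠ c) (had : a ≠ d) (hbc : b ≠ c) (hbd : b ≠ d) (hcd : c ≠ d) :
    False := by
  have hsub : ({a, b, c, d} : Finset V) ⊆ e := by
    intro x hx
    simp only [Finset.mem_insert, Finset.mem_singleton] at hx
    rcases hx with rfl | rfl | rfl | rfl <;> assumption
  have hcard : ({a, b, c, d} : Finset V).card = 4 := by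
    rw [Finset.card_insert_of_notMem (by simp [hab, hac, had]),
      Finset.card_insert_of_notMem (by simp [hbc, hbd]),
      Finset.card_insert_of_notMem (by simp [hcd]), Finset.card_singleton]
  have h1 := (hunif e he).2
  have h2 := Finset.card_le_card hsub
  omega

/-- Every covering [3]-uniform hypergraph on `n ≥ 6` vertices contains a Berge
cycle of length 4. -/
theorem covering_three_graph_berge_C4
    {V : Type*} [Fintype V] [DecidableEq V] (E : Finset (Finset V))
    (hn : 6 ≤ Fintype.card V)
    (hunif : ∀ e ∈ E, 1 ≤ e.card ∧ e.card ≤ 3)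
    (hcov : IsCovering E) :
    HasBergeCycle E 4 := by
  classical
  by_contra hno
  have hf : ∀ u v : V, u ≠ v → pe E u v ∈ E ∧ u ∈ pe E u v ∧ v ∈ pe E u v :=
    fun u v h => pe_spec hcov h
  -- the generic Berge-C4 construction from a "good" quadruple
  have cyc : ∀ a x b y : V, a ≠ x → a ≠ b → a ≠ y → x ≠ b → x ≠ y → b ≠ y →
      pe E x a ≠ pe E x b → pe E b x ≠ pe E b y → pe E y a ≠ pe E y b →
      pe E a x ≠ pe E a y → HasBergeCycle E 4 := by
    intro a x b y hax hab hay hxb hxy hby n1 n2 n3 n4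
    obtain ⟨he1, m1a, m1x⟩ := hf a x hax
    obtain ⟨he2, m2x, m2b⟩ := hf x b hxb
    obtain ⟨he3, m3b, m3y⟩ := hf b y hby
    obtain ⟨he4, m4y, m4a⟩ := hf y a (Ne.symm hay)
    have d12 : pe E a x ≠ pe E x b := by
      rw [pe_comm E a x]; exact n1
    have d23 : pe E x b ≠ pe E b y := by
      rw [pe_comm E x b]; exact n2
    have d34 : pe E b y ≠ pe E y a := by
      rw [pe_comm E b y]
      intro h; exact n3 h.symm
    have d41 : pe E y a ≠ pe E a x := by
      rw [pe_comm E y a]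
      intro h; exact n4 h.symm
    have d13 : pe E a x ≠ pe E b y := by
      intro h
      exact no4 hunif he1 m1a m1x (h ▸ m3b) (h ▸ m3y) hax hab hay hxb hxy hby
    have d24 : pe E x b ≠ pe E y a := by
      intro h
      exact no4 hunif he2 m2x m2b (h ▸ m4y) (h ▸ m4a) hxb hxy (Ne.symm hax) hby
        (Ne.symm hab) (Ne.symm hay)
    refine ⟨![a, x, b, y], ![pe E a x, pe E x b, pe E b y, pe E y a], ?_, ?_, ?_⟩
    · intro i j hij
      fin_cases i <;> fin_cases j <;> simp_all
    · intro i j hij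
      fin_cases i <;> fin_cases j <;> simp_all
    · intro i
      fin_cases i <;> refine ⟨by assumption, by simp [*], ?_⟩ <;>
        simp [Matrix.cons_val_zero, Matrix.cons_val_one, Matrix.head_cons] <;> assumption
  -- every quadruple of distinct vertices is "blocked"
  have blocked : ∀ a x b y : V, a ≠ x → a ≠ b → a ≠ y → x ≠ b → x ≠ y → b ≠ y →
      pe E x a = pe E x b ∨ pe E y a = pe E y b ∨ pe E a x = pe E a y ∨
        pe E b x = pe E b y := by
    intro a x b y h1 h2 h3 h4 h5 h6
    by_contra hc
    push_neg at hc
    exact hno (cyc a x b y h1 h2 h3 h4 h5 h6 hc.1 hc.2.2.2 hc.2.1 hc.2.2.1)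
  -- a 6-element set of vertices
  obtain ⟨W, -, hW6⟩ := Finset.exists_subset_card_eq (s := (univ : Finset V)) (n := 6)
    (by simpa using hn)
  -- "class" lemma: a vertex cannot tie three others together
  have cls : ∀ v a x y : V, v ≠ a → v ≠ x → v ≠ y → a ≠ x → a ≠ y → x ≠ y →
      pe E v a = pe E v x → pe E v a = pe E v y → False := by
    intro v a x y hva hvx hvy hax hay hxy e1 e2
    obtain ⟨he, mv, ma⟩ := hf v a hva
    obtain ⟨-, -, mx⟩ := hf v x hvx
    obtain ⟨-, -, my⟩ := hf v y hvy
    exact no4 hunif he mv ma (e1 ▸ mx) (e2 ▸ my) hva hvx hvy hax hay hxy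
  -- Step A: every pair inside W has an "owner" inside W
  have stepA : ∀ a ∈ W, ∀ b ∈ W, a ≠ b →
      ∃ v ∈ W, v ≠ a ∧ v ≠ b ∧ pe E v a = pe E v b := by
    intro a ha b hb hab
    by_contra hcon
    push_neg at hcon
    have hsub : ({a, b} : Finset V) ⊆ W := by
      intro x hx
      rcases Finset.mem_insert.mp hx with rfl | hx
      · exact ha
      · rcases Finset.mem_singleton.mp hx with rfl; exact hb
    have hcard : (W \ {a, b}).card = 4 := by
      rw [Finset.card_sdiff_of_subset hsub, hW6]
      rw [Finset.card_insert_of_notMem (by simp [hab]), Finset.card_singleton]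
    obtain ⟨c, hc⟩ := Finset.card_pos.mp (by omega : 0 < (W \ {a, b}).card)
    have hcard2 : ((W \ {a, b}).erase c).card = 3 := by
      rw [Finset.card_erase_of_mem hc, hcard]
    obtain ⟨d, hd⟩ := Finset.card_pos.mp (by omega : 0 < ((W \ {a, b}).erase c).card)
    have hcard3 : (((W \ {a, b}).erase c).erase d).card = 2 := by
      rw [Finset.card_erase_of_mem hd, hcard2]
    obtain ⟨g, hg⟩ := Finset.card_pos.mp (by omega : 0 < (((W \ {a, b}).erase c).erase d).card)
    -- memberships and distinctness
    have hdc : d ≠ c := (Finset.mem_erase.mp hd).1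
    have hd' : d ∈ W \ {a, b} := (Finset.mem_erase.mp hd).2
    have hgd : g ≠ d := (Finset.mem_erase.mp hg).1
    have hgc : g ≠ c := (Finset.mem_erase.mp (Finset.mem_erase.mp hg).2).1
    have hg' : g ∈ W \ {a, b} := (Finset.mem_erase.mp (Finset.mem_erase.mp hg).2).2
    have hcW : c ∈ W := (Finset.mem_sdiff.mp hc).1
    have hdW : d ∈ W := (Finset.mem_sdiff.mp hd').1
    have hgW : g ∈ W := (Finset.mem_sdiff.mp hg').1
    have hca : c ≠ a := by
      intro h; exact (Finset.mem_sdiff.mp hc).2 (by simp [h])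
    have hcb : c ≠ b := by
      intro h; exact (Finset.mem_sdiff.mp hc).2 (by simp [h])
    have hda : d ≠ a := by
      intro h; exact (Finset.mem_sdiff.mp hd').2 (by simp [h])
    have hdb : d ≠ b := by
      intro h; exact (Finset.mem_sdiff.mp hd').2 (by simp [h])
    have hga : g ≠ a := by
      intro h; exact (Finset.mem_sdiff.mp hg').2 (by simp [h])
    have hgb : g ≠ b := by
      intro h; exact (Finset.mem_sdiff.mp hg').2 (by simp [h])
    -- blocked instances
    have Hcd := blocked a c b d (Ne.symm hca) hab (Ne.symm hda) hcb
      (Ne.symm hdc) (Ne.symm hdb)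
    have Hce := blocked a c b g (Ne.symm hca) hab (Ne.symm hga) hcb
      (Ne.symm hgc) (Ne.symm hgb)
    have Hde := blocked a d b g (Ne.symm hda) hab (Ne.symm hga) hdb
      (Ne.symm hgd) (Ne.symm hgb)
    have hcd' : pe E a c = pe E a d ∨ pe E b c = pe E b d := by
      rcases Hcd with h | h | h | h
      · exact absurd h (hcon c hcW hca hcb)
      · exact absurd h (hcon d hdW hda hdb)
      · exact Or.inl h
      · exact Or.inr h
    have hce' : pe E a c = pe E a g ∨ pe E b c = pe E b g := by
      rcases Hce with h | h | h | h
      · exact absurd h (hcon c hcW hca hcb)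
      · exact absurd h (hcon g hgW hga hgb)
      · exact Or.inl h
      · exact Or.inr h
    have hde' : pe E a d = pe E a g ∨ pe E b d = pe E b g := by
      rcases Hde with h | h | h | h
      · exact absurd h (hcon d hdW hda hdb)
      · exact absurd h (hcon g hgW hga hgb)
      · exact Or.inl h
      · exact Or.inr h
    -- two of the three pairs {c,d},{c,g},{d,g} share an owner in {a,b}
    have clsa : pe E a c = pe E a d → pe E a c = pe E a g → False :=
      cls a c d g (Ne.symm hca) (Ne.symm hda) (Ne.symm hga) (Ne.symm hdc) (Ne.symm hgc)
        (Ne.symm hgd)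
    have clsb : pe E b c = pe E b d → pe E b c = pe E b g → False :=
      cls b c d g (Ne.symm hcb) (Ne.symm hdb) (Ne.symm hgb) (Ne.symm hdc) (Ne.symm hgc)
        (Ne.symm hgd)
    rcases hcd' with h1 | h1 <;> rcases hce' with h2 | h2 <;> rcases hde' with h3 | h3
    · exact clsa h1 h2
    · exact clsa h1 h2
    · exact clsa h1 (h1.trans h3)
    · exact clsb (h2.trans h3.symm) h2
    · exact clsa (h2.trans h3.symm) h2
    · exact clsb h1 (h1.trans h3)
    · exact clsb h1 h2
    · exact clsb h1 h2
  -- Step B: every vertex of W "owns" a pair through every other vertex of W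
  have star : ∀ a ∈ W, ∀ v ∈ W, v ≠ a →
      ∃ x ∈ W, x ≠ a ∧ x ≠ v ∧ pe E v a = pe E v x := by
    intro a ha v hv hva
    set σ : V → V := fun x =>
      if h : ∃ u ∈ W, u ≠ a ∧ u ≠ x ∧ pe E u a = pe E u x then h.choose else x with hσdef
    have hσmem : ∀ x ∈ W.erase a,
        σ x ∈ W.erase a ∧ σ x ≠ x ∧ pe E (σ x) a = pe E (σ x) x := by
      intro x hx
      have hxa : x ≠ a := (Finset.mem_erase.mp hx).1
      have hxW : x ∈ W := (Finset.mem_erase.mp hx).2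
      have hex : ∃ u ∈ W, u ≠ a ∧ u ≠ x ∧ pe E u a = pe E u x :=
        stepA a ha x hxW (Ne.symm hxa)
      have hrw : σ x = hex.choose := by rw [hσdef]; exact dif_pos hex
      obtain ⟨huW, hua, hux, heq⟩ := hex.choose_spec
      rw [hrw]
      exact ⟨Finset.mem_erase.mpr ⟨hua, huW⟩, hux, heq⟩
    have hinj : Set.InjOn σ (W.erase a) := by
      intro x hx y hy hxy
      by_contra hne
      obtain ⟨hm1, hne1, he1⟩ := hσmem x hx
      obtain ⟨hm2, hne2, he2⟩ := hσmem y hy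
      have hxa : x ≠ a := (Finset.mem_erase.mp hx).1
      have hya : y ≠ a := (Finset.mem_erase.mp hy).1
      apply cls (σ x) a x y (Finset.mem_erase.mp hm1).1 hne1 ?_ (Ne.symm hxa)
        (Ne.symm hya) hne he1 ?_
      · rw [hxy]; exact hne2
      · rw [hxy]; exact he2
    have himg : (W.erase a).image σ = W.erase a :=
      Finset.eq_of_subset_of_card_le
        (fun z hz => by
          obtain ⟨x, hx, rfl⟩ := Finset.mem_image.mp hz
          exact (hσmem x hx).1)
        (le_of_eq (Finset.card_image_of_injOn hinj).symm)
    have hvmem : v ∈ (W.erase a).image σ := by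
      rw [himg]; exact Finset.mem_erase.mpr ⟨hva, hv⟩
    obtain ⟨x, hx, hσx⟩ := Finset.mem_image.mp hvmem
    obtain ⟨-, hnex, heqx⟩ := hσmem x hx
    refine ⟨x, (Finset.mem_erase.mp hx).2, (Finset.mem_erase.mp hx).1, ?_, ?_⟩
    · intro h; exact hnex (by rw [hσx, h])
    · rw [← hσx]; exact heqx
  -- Final contradiction: a vertex v would need three pairwise disjoint owned
  -- pairs inside the 5-element set W \ {v}
  obtain ⟨v, hvW⟩ := Finset.card_pos.mp (by omega : 0 < W.card)
  set U := W.erase v with hUdef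
  have hU : U.card = 5 := by rw [hUdef, Finset.card_erase_of_mem hvW, hW6]
  have hne_v : ∀ u ∈ U, v ≠ u := fun u hu => Ne.symm (Finset.mem_erase.mp hu).1
  have partner : ∀ a ∈ U, ∃ x, x ∈ U ∧ x ≠ a ∧ pe E v a = pe E v x := by
    intro a haU
    have haW : a ∈ W := (Finset.mem_erase.mp haU).2
    obtain ⟨x, hxW, hxa, hxv, heq⟩ :=
      star a haW v hvW (hne_v a haU)
    exact ⟨x, Finset.mem_erase.mpr ⟨hxv, hxW⟩, hxa, heq⟩
  obtain ⟨a1, ha1U⟩ := Finset.card_pos.mp (by omega : 0 < U.card)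
  obtain ⟨x1, hx1U, hx1a1, heq1⟩ := partner a1 ha1U
  have hT2 : ((U.erase a1).erase x1).card = 3 := by
    rw [Finset.card_erase_of_mem (Finset.mem_erase.mpr ⟨hx1a1, hx1U⟩),
      Finset.card_erase_of_mem ha1U, hU]
  obtain ⟨a2, ha2⟩ := Finset.card_pos.mp (by omega : 0 < ((U.erase a1).erase x1).card)
  have ha2x1 : a2 ≠ x1 := (Finset.mem_erase.mp ha2).1
  have ha2a1 : a2 ≠ a1 := (Finset.mem_erase.mp (Finset.mem_erase.mp ha2).2).1
  have ha2U : a2 ∈ U := (Finset.mem_erase.mp (Finset.mem_erase.mp ha2).2).2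
  obtain ⟨x2, hx2U, hx2a2, heq2⟩ := partner a2 ha2U
  have hx2a1 : x2 ≠ a1 := by
    intro h
    exact cls v a1 x1 a2 (hne_v a1 ha1U) (hne_v x1 hx1U) (hne_v a2 ha2U)
      (Ne.symm hx1a1) (Ne.symm ha2a1) (Ne.symm ha2x1) heq1 (h ▸ heq2).symm
  have hx2x1 : x2 ≠ x1 := by
    intro h
    exact cls v x1 a1 a2 (hne_v x1 hx1U) (hne_v a1 ha1U) (hne_v a2 ha2U)
      hx1a1 (Ne.symm ha2x1) (Ne.symm ha2a1) heq1.symm (h ▸ heq2).symm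
  have hT4 : ((((U.erase a1).erase x1).erase a2).erase x2).card = 1 := by
    rw [Finset.card_erase_of_mem, Finset.card_erase_of_mem ha2, hT2]
    exact Finset.mem_erase.mpr ⟨hx2a2,
      Finset.mem_erase.mpr ⟨hx2x1, Finset.mem_erase.mpr ⟨hx2a1, hx2U⟩⟩⟩
  obtain ⟨a3, ha3⟩ := Finset.card_pos.mp
    (by omega : 0 < ((((U.erase a1).erase x1).erase a2).erase x2).card)
  have ha3x2 : a3 ≠ x2 := (Finset.mem_erase.mp ha3).1
  have ha3a2 : a3 ≠ a2 := (Finset.mem_erase.mp (Finset.mem_erase.mp ha3).2).1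
  have ha3x1 : a3 ≠ x1 :=
    (Finset.mem_erase.mp (Finset.mem_erase.mp (Finset.mem_erase.mp ha3).2).2).1
  have ha3a1 : a3 ≠ a1 := (Finset.mem_erase.mp
    (Finset.mem_erase.mp (Finset.mem_erase.mp (Finset.mem_erase.mp ha3).2).2).2).1
  have ha3U : a3 ∈ U := (Finset.mem_erase.mp
    (Finset.mem_erase.mp (Finset.mem_erase.mp (Finset.mem_erase.mp ha3).2).2).2).2
  obtain ⟨x3, hx3U, hx3a3, heq3⟩ := partner a3 ha3U
  have hx3a1 : x3 ≠ a1 := by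
    intro h
    exact cls v a1 x1 a3 (hne_v a1 ha1U) (hne_v x1 hx1U) (hne_v a3 ha3U)
      (Ne.symm hx1a1) (Ne.symm ha3a1) (Ne.symm ha3x1) heq1 (h ▸ heq3).symm
  have hx3x1 : x3 ≠ x1 := by
    intro h
    exact cls v x1 a1 a3 (hne_v x1 hx1U) (hne_v a1 ha1U) (hne_v a3 ha3U)
      hx1a1 (Ne.symm ha3x1) (Ne.symm ha3a1) heq1.symm (h ▸ heq3).symm
  have hx3a2 : x3 ≠ a2 := by
    intro h
    exact cls v a2 x2 a3 (hne_v a2 ha2U) (hne_v x2 hx2U) (hne_v a3 ha3U)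
      (Ne.symm hx2a2) (Ne.symm ha3a2) (Ne.symm ha3x2) heq2 (h ▸ heq3).symm
  have hx3x2 : x3 ≠ x2 := by
    intro h
    exact cls v x2 a2 a3 (hne_v x2 hx2U) (hne_v a2 ha2U) (hne_v a3 ha3U)
      hx2a2 (Ne.symm ha3x2) (Ne.symm ha3a2) heq2.symm (h ▸ heq3).symm
  -- the five elements a1,x1,a2,x2,a3 fill up U, leaving no room for x3
  have hSsub : ({a1, x1, a2, x2, a3} : Finset V) ⊆ U := by
    intro z hz
    simp only [Finset.mem_insert, Finset.mem_singleton] at hz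
    rcases hz with rfl | rfl | rfl | rfl | rfl <;> assumption
  have hScard : ({a1, x1, a2, x2, a3} : Finset V).card = 5 := by
    rw [Finset.card_insert_of_notMem
        (by simp [Ne.symm hx1a1, Ne.symm ha2a1, Ne.symm hx2a1, Ne.symm ha3a1]),
      Finset.card_insert_of_notMem
        (by simp [Ne.symm ha2x1, Ne.symm hx2x1, Ne.symm ha3x1]),
      Finset.card_insert_of_notMem (by simp [Ne.symm hx2a2, Ne.symm ha3a2]),
      Finset.card_insert_of_notMem (by simp [Ne.symm ha3x2]), Finset.card_singleton]
  have hEq : ({a1, x1, a2, x2, a3} : Finset V) = U :=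
    Finset.eq_of_subset_of_card_le hSsub (by rw [hU, hScard])
  have hx3mem : x3 ∈ ({a1, x1, a2, x2, a3} : Finset V) := by rw [hEq]; exact hx3U
  simp only [Finset.mem_insert, Finset.mem_singleton] at hx3mem
  rcases hx3mem with h | h | h | h | h
  · exact hx3a1 h
  · exact hx3x1 h
  · exact hx3a2 h
  · exact hx3x2 h
  · exact hx3a3 h
end

section
/- For every integer k ≥ 2 there exists an integer n_0 = n_0(k) such that for every set R ⊆ {1,...,k}, every covering R-uniform hypergraph on n ≥ n_0 vertices contains a Hamiltonian Berge path, i.e., a Berge path whose base vertex sequence consists of all n vertices. -/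
set_option linter.unusedSectionVars false
set_option linter.unusedVariables false

namespace BergePf

open Finset

variable {V : Type} [Fintype V] [DecidableEq V]

/-- Data of a Berge path with `t` base vertices, given by total functions. -/
structure PD (E : Finset (Finset V)) (t : ℕ) : Type where
  u : ℕ → V
  h : ℕ → Finset V
  uinj : ∀ ⦃i j : ℕ⦄, i < t → j < t → u i = u j → i = j
  hinj : ∀ ⦃i j : ℕ⦄, i + 1 < t → j + 1 < t → h i = h j → i = j
  hE : ∀ i, i + 1 < t → h i ∈ E
  hu1 : ∀ i, i + 1 < t → u i ∈ h i
  hu2 : ∀ i, i + 1 < t → u (i + 1) ∈ h i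

def Good (E : Finset (Finset V)) (t : ℕ) : Prop := Nonempty (PD E t)

lemma good_one (E : Finset (Finset V)) (v0 : V) : Good E 1 :=
  ⟨⟨fun _ => v0, fun _ => ∅, fun i j hi hj _ => by omega, fun i j hi hj _ => by omega,
    fun i hi => by omega, fun i hi => by omega, fun i hi => by omega⟩⟩

lemma good_le_card {E : Finset (Finset V)} {t : ℕ} (g : Good E t) : t ≤ Fintype.card V := by
  obtain ⟨pd⟩ := g
  have : (range t).card ≤ (univ : Finset V).card := by
    apply Finset.card_le_card_of_injOn pd.u (fun a _ => mem_univ _)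
    intro a ha b hb hab
    exact pd.uinj (mem_range.1 (by simpa using ha)) (mem_range.1 (by simpa using hb)) hab
  simpa using this

lemma good_to_hbp {E : Finset (Finset V)} {t : ℕ} (g : Good E t) : HasBergePath E t := by
  obtain ⟨pd⟩ := g
  refine ⟨fun i => pd.u i.1, fun i => pd.h i.1, ?_, ?_, ?_⟩
  · intro i j hij
    exact Fin.ext (pd.uinj i.2 j.2 hij)
  · intro i j hij
    have hi : i.1 + 1 < t := by have := i.2; omega
    have hj : j.1 + 1 < t := by have := j.2; omega
    exact Fin.ext (pd.hinj hi hj hij)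
  · intro i
    have hi : i.1 + 1 < t := by have := i.2; omega
    exact ⟨pd.hE i.1 hi, pd.hu1 i.1 hi, pd.hu2 i.1 hi⟩

/-! ### Counting infrastructure -/

/-- The set of hyperedges used by a path. -/
def usedSet {E : Finset (Finset V)} {t : ℕ} (pd : PD E t) : Finset (Finset V) :=
  (range (t - 1)).image pd.h

/-- Degree of a vertex in a set of hyperedges. -/
def deg (S : Finset (Finset V)) (v : V) : ℕ := (S.filter (fun g => v ∈ g)).card

lemma mem_usedSet {E : Finset (Finset V)} {t : ℕ} (pd : PD E t) {g : Finset V} :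
    g ∈ usedSet pd ↔ ∃ i, i + 1 < t ∧ pd.h i = g := by
  simp only [usedSet, mem_image, mem_range]
  constructor
  · rintro ⟨i, hi, rfl⟩; exact ⟨i, by omega, rfl⟩
  · rintro ⟨i, hi, rfl⟩; exact ⟨i, by omega, rfl⟩

lemma usedSet_subset {E : Finset (Finset V)} {t : ℕ} (pd : PD E t) : usedSet pd ⊆ E := by
  intro g hg
  obtain ⟨i, hi, rfl⟩ := (mem_usedSet pd).1 hg
  exact pd.hE i hi

lemma card_usedSet {E : Finset (Finset V)} {t : ℕ} (pd : PD E t) :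
    (usedSet pd).card = t - 1 := by
  rw [usedSet, Finset.card_image_of_injOn, card_range]
  intro i hi j hj hij
  exact pd.hinj (by have := mem_range.1 hi; omega) (by have := mem_range.1 hj; omega) hij

lemma deg_eq_indices {E : Finset (Finset V)} {t : ℕ} (pd : PD E t) (v : V) :
    deg (usedSet pd) v = ((range (t - 1)).filter (fun i => v ∈ pd.h i)).card := by
  rw [deg]
  have : (usedSet pd).filter (fun g => v ∈ g)
      = ((range (t - 1)).filter (fun i => v ∈ pd.h i)).image pd.h := by
    ext g
    simp only [usedSet, mem_filter, mem_image, mem_range]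
    constructor
    · rintro ⟨⟨i, hi, rfl⟩, hv⟩; exact ⟨i, ⟨hi, hv⟩, rfl⟩
    · rintro ⟨i, ⟨hi, hv⟩, rfl⟩; exact ⟨⟨i, hi, rfl⟩, hv⟩
  rw [this, Finset.card_image_of_injOn]
  intro i hi j hj hij
  have hi' := Finset.mem_filter.1 (Finset.mem_coe.1 hi)
  have hj' := Finset.mem_filter.1 (Finset.mem_coe.1 hj)
  exact pd.hinj (by have := Finset.mem_range.1 hi'.1; omega)
    (by have := Finset.mem_range.1 hj'.1; omega) hij

lemma sum_deg (S : Finset (Finset V)) : ∑ v : V, deg S v = ∑ g ∈ S, g.card := by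
  have h1 : ∀ v ∈ (univ : Finset V), deg S v = ∑ g ∈ S, if v ∈ g then 1 else 0 :=
    fun v _ => Finset.card_filter _ _
  have h2 : ∀ g ∈ S, g.card = ∑ v : V, if v ∈ g then 1 else 0 := by
    intro g _
    have h3 : (univ.filter (fun v => v ∈ g)) = g := by ext v; simp
    conv_lhs => rw [← h3]
    rw [Finset.card_filter]
  rw [Finset.sum_congr rfl h1, Finset.sum_congr rfl h2, Finset.sum_comm]

lemma sum_deg_le {E : Finset (Finset V)} (k : ℕ) (hEk : ∀ e ∈ E, e.card ≤ k)
    (S : Finset (Finset V)) (hS : S ⊆ E) : ∑ v : V, deg S v ≤ k * S.card := by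
  rw [sum_deg]
  calc ∑ g ∈ S, g.card ≤ S.card • k :=
        Finset.sum_le_card_nsmul S _ k (fun g hg => hEk g (hS hg))
  _ = S.card * k := rfl
  _ = k * S.card := Nat.mul_comm _ _

/-- `Ubar S y` : vertices (other than `y`) sharing a used edge with `y`. -/
def Ubar (S : Finset (Finset V)) (y : V) : Finset V :=
  (S.filter (fun g => y ∈ g)).biUnion (fun g => g.erase y)

lemma mem_Ubar {S : Finset (Finset V)} {y v : V} :
    v ∈ Ubar S y ↔ ∃ g ∈ S, y ∈ g ∧ v ∈ g ∧ v ≠ y := by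
  simp only [Ubar, mem_biUnion, mem_filter, mem_erase]
  constructor
  · rintro ⟨g, ⟨hgS, hyg⟩, hne, hvg⟩; exact ⟨g, hgS, hyg, hvg, hne⟩
  · rintro ⟨g, hgS, hyg, hvg, hne⟩; exact ⟨g, ⟨hgS, hyg⟩, hne, hvg⟩

lemma card_Ubar_le {E : Finset (Finset V)} (k : ℕ) (hk : 1 ≤ k)
    (hEk : ∀ e ∈ E, e.card ≤ k) {S : Finset (Finset V)} (hS : S ⊆ E) (y : V) :
    (Ubar S y).card ≤ k * deg S y := by
  calc (Ubar S y).card ≤ ∑ g ∈ S.filter (fun g => y ∈ g), (g.erase y).card :=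
        Finset.card_biUnion_le
  _ ≤ (S.filter (fun g => y ∈ g)).card • k := by
      apply Finset.sum_le_card_nsmul
      intro g hg
      have hgE : g ∈ E := hS (mem_filter.1 hg).1
      have := Finset.card_erase_le (s := g) (a := y)
      have := hEk g hgE
      omega
  _ = deg S y * k := rfl
  _ = k * deg S y := Nat.mul_comm _ _


/-! ### Path surgeries -/

/-- Extend a maximal path at its end by a fresh edge. -/
lemma good_extend {E : Finset (Finset V)} {t : ℕ} (pd : PD E t) (ht : 1 ≤ t)
    (x : V) (hx : ∀ i, i < t → pd.u i ≠ x)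
    (e : Finset V) (heE : e ∈ E) (he1 : pd.u (t - 1) ∈ e) (he2 : x ∈ e)
    (hef : ∀ i, i + 1 < t → pd.h i ≠ e) : Good E (t + 1) := by
  refine ⟨⟨fun i => if i < t then pd.u i else x,
          fun i => if i + 1 < t then pd.h i else e, ?_, ?_, ?_, ?_, ?_⟩⟩
  · intro i i' hi hi' heq
    split_ifs at heq with h1 h2 h2
    · exact pd.uinj h1 h2 heq
    · exact absurd heq (hx i h1)
    · exact absurd heq.symm (hx i' h2)
    · omega
  · intro i i' hi hi' heq
    split_ifs at heq with h1 h2 h2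
    · exact pd.hinj h1 h2 heq
    · exact absurd heq (hef i h1)
    · exact absurd heq.symm (hef i' h2)
    · omega
  · intro i hi
    split_ifs with h1
    · exact pd.hE i h1
    · exact heE
  · intro i hi
    by_cases h1 : i + 1 < t
    · rw [if_pos (show i < t by omega), if_pos h1]
      exact pd.hu1 i h1
    · rw [if_neg h1]
      by_cases h2 : i < t
      · rw [if_pos h2]
        have hi' : i = t - 1 := by omega
        rw [hi']; exact he1
      · omega
  · intro i hi
    by_cases h1 : i + 1 < t
    · rw [if_pos h1, if_pos h1]
      exact pd.hu2 i h1
    · rw [if_neg h1, if_neg h1]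
      exact he2

/-- Free rotation at the end of the path, using a used edge containing the endpoint. -/
lemma rotate_end {E : Finset (Finset V)} {t : ℕ} (pd : PD E t) {j : ℕ} (hj : j + 2 < t)
    (hmem : pd.u (t - 1) ∈ pd.h j) :
    ∃ pd' : PD E t, usedSet pd' = usedSet pd ∧ pd'.u 0 = pd.u 0 ∧
      pd'.u (t - 1) = pd.u (j + 1) := by
  refine ⟨⟨fun i => if i ≤ j then pd.u i else pd.u (t + j - i),
          fun i => if i ≤ j then pd.h i else pd.h (t + j - 1 - i), ?_, ?_, ?_, ?_, ?_⟩, ?_, ?_, ?_⟩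
  · intro i i' hi hi' heq
    split_ifs at heq with h1 h2 h2
    · exact pd.uinj hi hi' heq
    · have := pd.uinj hi (show t + j - i' < t by omega) heq; omega
    · have := pd.uinj (show t + j - i < t by omega) hi' heq; omega
    · have := pd.uinj (show t + j - i < t by omega) (show t + j - i' < t by omega) heq; omega
  · intro i i' hi hi' heq
    split_ifs at heq with h1 h2 h2
    · exact pd.hinj hi hi' heq
    · have := pd.hinj hi (show (t + j - 1 - i') + 1 < t by omega) heq; omega
    · have := pd.hinj (show (t + j - 1 - i) + 1 < t by omega) hi' heq; omega
    · have := pd.hinj (show (t + j - 1 - i) + 1 < t by omega)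
        (show (t + j - 1 - i') + 1 < t by omega) heq; omega
  · intro i hi
    split_ifs with h1
    · exact pd.hE i hi
    · exact pd.hE _ (show (t + j - 1 - i) + 1 < t by omega)
  · intro i hi
    split_ifs with h1
    · exact pd.hu1 i hi
    · have e1 : t + j - i = (t + j - 1 - i) + 1 := by omega
      rw [e1]; exact pd.hu2 _ (by omega)
  · intro i hi
    by_cases h1 : i + 1 ≤ j
    · rw [if_pos h1, if_pos (show i ≤ j by omega)]
      exact pd.hu2 i hi
    · by_cases h2 : i ≤ j
      · rw [if_neg h1, if_pos h2]
        have e0 : i = j := by omega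
        have e1 : t + j - (i + 1) = t - 1 := by omega
        rw [e1, e0]; exact hmem
      · rw [if_neg h1, if_neg h2]
        have e1 : t + j - (i + 1) = (t + j - 1 - i) := by omega
        rw [e1]; exact pd.hu1 _ (by omega)
  · -- usedSet equality
    ext g
    rw [mem_usedSet, mem_usedSet]
    constructor
    · rintro ⟨i, hi, hg⟩
      simp only at hg
      split_ifs at hg with h1
      · exact ⟨i, hi, hg⟩
      · exact ⟨t + j - 1 - i, by omega, hg⟩
    · rintro ⟨i, hi, hg⟩
      by_cases h1 : i ≤ j
      · exact ⟨i, hi, by simp only [if_pos h1]; exact hg⟩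
      · refine ⟨t + j - 1 - i, by omega, ?_⟩
        simp only [if_neg (show ¬ (t + j - 1 - i ≤ j) by omega)]
        have e1 : t + j - 1 - (t + j - 1 - i) = i := by omega
        rw [e1]; exact hg
  · simp only [if_pos (Nat.zero_le j)]
  · simp only [if_neg (show ¬ (t - 1 ≤ j) by omega)]
    congr 1; omega

/-- Free rotation at the start of the path. -/
lemma rotate_start {E : Finset (Finset V)} {t : ℕ} (pd : PD E t) {j : ℕ}
    (hj0 : 1 ≤ j) (hj : j + 1 < t) (hmem : pd.u 0 ∈ pd.h j) :
    ∃ pd' : PD E t, usedSet pd' = usedSet pd ∧ pd'.u 0 = pd.u j ∧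
      pd'.u (t - 1) = pd.u (t - 1) := by
  refine ⟨⟨fun i => if i ≤ j then pd.u (j - i) else pd.u i,
          fun i => if i < j then pd.h (j - 1 - i) else pd.h i, ?_, ?_, ?_, ?_, ?_⟩, ?_, ?_, ?_⟩
  · intro i i' hi hi' heq
    split_ifs at heq with h1 h2 h2
    · have := pd.uinj (show j - i < t by omega) (show j - i' < t by omega) heq; omega
    · have := pd.uinj (show j - i < t by omega) hi' heq; omega
    · have := pd.uinj hi (show j - i' < t by omega) heq; omega
    · exact pd.uinj hi hi' heq
  · intro i i' hi hi' heq
    split_ifs at heq with h1 h2 h2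
    · have := pd.hinj (show (j - 1 - i) + 1 < t by omega)
        (show (j - 1 - i') + 1 < t by omega) heq; omega
    · have := pd.hinj (show (j - 1 - i) + 1 < t by omega) hi' heq; omega
    · have := pd.hinj hi (show (j - 1 - i') + 1 < t by omega) heq; omega
    · exact pd.hinj hi hi' heq
  · intro i hi
    split_ifs with h1
    · exact pd.hE _ (show (j - 1 - i) + 1 < t by omega)
    · exact pd.hE i hi
  · intro i hi
    split_ifs with h1 h2 h2
    · have e1 : j - i = (j - 1 - i) + 1 := by omega
      rw [e1]; exact pd.hu2 _ (by omega)
    · omega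
    · -- i ≤ j, ¬ i < j : i = j
      have e0 : i = j := by omega
      have e1 : j - i = 0 := by omega
      rw [e1, e0]; exact hmem
    · exact pd.hu1 i hi
  · intro i hi
    split_ifs with h1 h2 h2
    · have e1 : j - (i + 1) = j - 1 - i := by omega
      rw [e1]; exact pd.hu1 _ (by omega)
    · omega
    · omega
    · exact pd.hu2 i hi
  · ext g
    rw [mem_usedSet, mem_usedSet]
    constructor
    · rintro ⟨i, hi, hg⟩
      simp only at hg
      split_ifs at hg with h1
      · exact ⟨j - 1 - i, by omega, hg⟩
      · exact ⟨i, hi, hg⟩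
    · rintro ⟨i, hi, hg⟩
      by_cases h1 : i < j
      · refine ⟨j - 1 - i, by omega, ?_⟩
        simp only [if_pos (show j - 1 - i < j by omega)]
        have e1 : j - 1 - (j - 1 - i) = i := by omega
        rw [e1]; exact hg
      · exact ⟨i, hi, by simp only [if_neg h1]; exact hg⟩
  · simp only [if_pos (Nat.zero_le j), Nat.sub_zero]
  · simp only [if_neg (show ¬ (t - 1 ≤ j) by omega)]



/-- Rotate at gap `j` (with edge `e`) and then extend by `x` (with edge `c`). -/
lemma good_rotate_extend {E : Finset (Finset V)} {t : ℕ} (pd : PD E t) {j : ℕ} (hj : j + 2 < t)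
    (x : V) (hx : ∀ i, i < t → pd.u i ≠ x)
    (e c : Finset V) (heE : e ∈ E) (hcE : c ∈ E)
    (he1 : pd.u j ∈ e) (he2 : pd.u (t - 1) ∈ e)
    (hc1 : pd.u (j + 1) ∈ c) (hc2 : x ∈ c)
    (hef : ∀ i, i + 1 < t → i ≠ j → pd.h i ≠ e)
    (hcf : ∀ i, i + 1 < t → i ≠ j → pd.h i ≠ c)
    (hcne : c ≠ e) : Good E (t + 1) := by
  refine ⟨⟨fun i => if i = t then x else if i ≤ j then pd.u i else pd.u (t + j - i),
      fun i => if i = t - 1 then c else if i = j then e else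
        if i < j then pd.h i else pd.h (t + j - 1 - i), ?_, ?_, ?_, ?_, ?_⟩⟩
  · intro i i' hi hi' heq
    by_cases h1 : i = t
    · rw [if_pos h1] at heq
      by_cases h2 : i' = t
      · omega
      · rw [if_neg h2] at heq
        by_cases h3 : i' ≤ j
        · rw [if_pos h3] at heq; exact absurd heq.symm (hx i' (by omega))
        · rw [if_neg h3] at heq; exact absurd heq.symm (hx _ (show t + j - i' < t by omega))
    · rw [if_neg h1] at heq
      by_cases h2 : i' = t
      · rw [if_pos h2] at heq
        by_cases h3 : i ≤ j
        · rw [if_pos h3] at heq; exact absurd heq (hx i (by omega))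
        · rw [if_neg h3] at heq; exact absurd heq (hx _ (show t + j - i < t by omega))
      · rw [if_neg h2] at heq
        by_cases h3 : i ≤ j <;> by_cases h4 : i' ≤ j
        · rw [if_pos h3, if_pos h4] at heq; exact pd.uinj (by omega) (by omega) heq
        · rw [if_pos h3, if_neg h4] at heq
          have := pd.uinj (by omega) (show t + j - i' < t by omega) heq; omega
        · rw [if_neg h3, if_pos h4] at heq
          have := pd.uinj (show t + j - i < t by omega) (by omega) heq; omega
        · rw [if_neg h3, if_neg h4] at heq
          have := pd.uinj (show t + j - i < t by omega) (show t + j - i' < t by omega) heq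
          omega
  · intro i i' hi hi' heq
    by_cases h1 : i = t - 1
    · rw [if_pos h1] at heq
      by_cases h2 : i' = t - 1
      · omega
      · rw [if_neg h2] at heq
        by_cases h3 : i' = j
        · rw [if_pos h3] at heq; exact absurd heq.symm (Ne.symm hcne)
        · rw [if_neg h3] at heq
          by_cases h4 : i' < j
          · rw [if_pos h4] at heq; exact absurd heq.symm (hcf i' (by omega) (by omega))
          · rw [if_neg h4] at heq
            exact absurd heq.symm (hcf _ (show (t + j - 1 - i') + 1 < t by omega) (by omega))
    · rw [if_neg h1] at heq
      by_cases h2 : i' = t - 1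
      · rw [if_pos h2] at heq
        by_cases h3 : i = j
        · rw [if_pos h3] at heq; exact absurd heq hcne.symm
        · rw [if_neg h3] at heq
          by_cases h4 : i < j
          · rw [if_pos h4] at heq; exact absurd heq (hcf i (by omega) (by omega))
          · rw [if_neg h4] at heq
            exact absurd heq (hcf _ (show (t + j - 1 - i) + 1 < t by omega) (by omega))
      · rw [if_neg h2] at heq
        by_cases h3 : i = j
        · rw [if_pos h3] at heq
          by_cases h4 : i' = j
          · omega
          · rw [if_neg h4] at heq
            by_cases h5 : i' < j
            · rw [if_pos h5] at heq; exact absurd heq.symm (hef i' (by omega) (by omega))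
            · rw [if_neg h5] at heq
              exact absurd heq.symm (hef _ (show (t + j - 1 - i') + 1 < t by omega) (by omega))
        · rw [if_neg h3] at heq
          by_cases h4 : i' = j
          · rw [if_pos h4] at heq
            by_cases h5 : i < j
            · rw [if_pos h5] at heq; exact absurd heq (hef i (by omega) (by omega))
            · rw [if_neg h5] at heq
              exact absurd heq (hef _ (show (t + j - 1 - i) + 1 < t by omega) (by omega))
          · rw [if_neg h4] at heq
            by_cases h5 : i < j <;> by_cases h6 : i' < j
            · rw [if_pos h5, if_pos h6] at heq; exact pd.hinj (by omega) (by omega) heq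
            · rw [if_pos h5, if_neg h6] at heq
              have := pd.hinj (by omega) (show (t + j - 1 - i') + 1 < t by omega) heq; omega
            · rw [if_neg h5, if_pos h6] at heq
              have := pd.hinj (show (t + j - 1 - i) + 1 < t by omega) (by omega) heq; omega
            · rw [if_neg h5, if_neg h6] at heq
              have := pd.hinj (show (t + j - 1 - i) + 1 < t by omega)
                (show (t + j - 1 - i') + 1 < t by omega) heq; omega
  · intro i hi
    by_cases h1 : i = t - 1
    · rw [if_pos h1]; exact hcE
    · rw [if_neg h1]
      by_cases h2 : i = j
      · rw [if_pos h2]; exact heE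
      · rw [if_neg h2]
        by_cases h3 : i < j
        · rw [if_pos h3]; exact pd.hE i (by omega)
        · rw [if_neg h3]; exact pd.hE _ (show (t + j - 1 - i) + 1 < t by omega)
  · intro i hi
    by_cases h1 : i = t - 1
    · rw [if_pos h1, if_neg (show ¬ (i = t) by omega), if_neg (show ¬ (i ≤ j) by omega)]
      have e1 : t + j - i = j + 1 := by omega
      rw [e1]; exact hc1
    · rw [if_neg h1]
      by_cases h2 : i = j
      · rw [if_pos h2, if_neg (show ¬ (i = t) by omega), if_pos (show i ≤ j by omega), h2]
        exact he1
      · rw [if_neg h2]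
        by_cases h3 : i < j
        · rw [if_pos h3, if_neg (show ¬ (i = t) by omega), if_pos (show i ≤ j by omega)]
          exact pd.hu1 i (by omega)
        · rw [if_neg h3, if_neg (show ¬ (i = t) by omega),
            if_neg (show ¬ (i ≤ j) by omega)]
          have e1 : t + j - i = (t + j - 1 - i) + 1 := by omega
          rw [e1]; exact pd.hu2 _ (by omega)
  · intro i hi
    by_cases h1 : i = t - 1
    · rw [if_pos h1, if_pos (show i + 1 = t by omega)]
      exact hc2
    · rw [if_neg h1, if_neg (show ¬ (i + 1 = t) by omega)]
      by_cases h2 : i = j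
      · rw [if_pos h2, if_neg (show ¬ (i + 1 ≤ j) by omega)]
        have e1 : t + j - (i + 1) = t - 1 := by omega
        rw [e1]; exact he2
      · rw [if_neg h2]
        by_cases h3 : i < j
        · rw [if_pos h3, if_pos (show i + 1 ≤ j by omega)]
          exact pd.hu2 i (by omega)
        · rw [if_neg h3, if_neg (show ¬ (i + 1 ≤ j) by omega)]
          have e1 : t + j - (i + 1) = t + j - 1 - i := by omega
          rw [e1]; exact pd.hu1 _ (by omega)

/-- Splice `x` in at a used edge containing it, rerouting through the start. -/
lemma good_splice {E : Finset (Finset V)} {t : ℕ} (pd : PD E t) {j : ℕ} (hj : j + 1 < t)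
    (x : V) (hx : ∀ i, i < t → pd.u i ≠ x) (hxh : x ∈ pd.h j)
    (e : Finset V) (heE : e ∈ E) (he0 : pd.u 0 ∈ e) (hej : pd.u (j + 1) ∈ e)
    (hef : ∀ i, i + 1 < t → pd.h i ≠ e) : Good E (t + 1) := by
  refine ⟨⟨fun i => if i = 0 then x else if i ≤ j + 1 then pd.u (j + 1 - i) else pd.u (i - 1),
      fun i => if i = 0 then pd.h j else if i ≤ j then pd.h (j - i) else
        if i = j + 1 then e else pd.h (i - 1), ?_, ?_, ?_, ?_, ?_⟩⟩
  · intro i i' hi hi' heq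
    by_cases h1 : i = 0
    · rw [if_pos h1] at heq
      by_cases h2 : i' = 0
      · omega
      · rw [if_neg h2] at heq
        by_cases h3 : i' ≤ j + 1
        · rw [if_pos h3] at heq; exact absurd heq.symm (hx _ (by omega))
        · rw [if_neg h3] at heq; exact absurd heq.symm (hx _ (by omega))
    · rw [if_neg h1] at heq
      by_cases h2 : i' = 0
      · rw [if_pos h2] at heq
        by_cases h3 : i ≤ j + 1
        · rw [if_pos h3] at heq; exact absurd heq (hx _ (by omega))
        · rw [if_neg h3] at heq; exact absurd heq (hx _ (by omega))
      · rw [if_neg h2] at heq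
        by_cases h3 : i ≤ j + 1 <;> by_cases h4 : i' ≤ j + 1
        · rw [if_pos h3, if_pos h4] at heq
          have := pd.uinj (show j + 1 - i < t by omega) (show j + 1 - i' < t by omega) heq
          omega
        · rw [if_pos h3, if_neg h4] at heq
          have := pd.uinj (show j + 1 - i < t by omega) (show i' - 1 < t by omega) heq; omega
        · rw [if_neg h3, if_pos h4] at heq
          have := pd.uinj (show i - 1 < t by omega) (show j + 1 - i' < t by omega) heq; omega
        · rw [if_neg h3, if_neg h4] at heq
          have := pd.uinj (show i - 1 < t by omega) (show i' - 1 < t by omega) heq; omega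
  · intro i i' hi hi' heq
    by_cases h1 : i = 0
    · rw [if_pos h1] at heq
      by_cases h2 : i' = 0
      · omega
      · rw [if_neg h2] at heq
        by_cases h3 : i' ≤ j
        · rw [if_pos h3] at heq
          have := pd.hinj (by omega) (show (j - i') + 1 < t by omega) heq; omega
        · rw [if_neg h3] at heq
          by_cases h4 : i' = j + 1
          · rw [if_pos h4] at heq; exact absurd heq (hef j (by omega))
          · rw [if_neg h4] at heq
            have := pd.hinj (by omega) (show (i' - 1) + 1 < t by omega) heq; omega
    · rw [if_neg h1] at heq
      by_cases h2 : i' = 0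
      · rw [if_pos h2] at heq
        by_cases h3 : i ≤ j
        · rw [if_pos h3] at heq
          have := pd.hinj (show (j - i) + 1 < t by omega) (by omega) heq; omega
        · rw [if_neg h3] at heq
          by_cases h4 : i = j + 1
          · rw [if_pos h4] at heq; exact absurd heq.symm (hef j (by omega))
          · rw [if_neg h4] at heq
            have := pd.hinj (show (i - 1) + 1 < t by omega) (by omega) heq; omega
      · rw [if_neg h2] at heq
        by_cases h3 : i ≤ j <;> by_cases h4 : i' ≤ j
        · rw [if_pos h3, if_pos h4] at heq
          have := pd.hinj (show (j - i) + 1 < t by omega) (show (j - i') + 1 < t by omega) heq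
          omega
        · rw [if_pos h3, if_neg h4] at heq
          by_cases h5 : i' = j + 1
          · rw [if_pos h5] at heq; exact absurd heq (hef _ (by omega))
          · rw [if_neg h5] at heq
            have := pd.hinj (show (j - i) + 1 < t by omega)
              (show (i' - 1) + 1 < t by omega) heq; omega
        · rw [if_neg h3, if_pos h4] at heq
          by_cases h5 : i = j + 1
          · rw [if_pos h5] at heq; exact absurd heq.symm (hef _ (by omega))
          · rw [if_neg h5] at heq
            have := pd.hinj (show (i - 1) + 1 < t by omega)
              (show (j - i') + 1 < t by omega) heq; omega
        · rw [if_neg h3, if_neg h4] at heq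
          by_cases h5 : i = j + 1
          · rw [if_pos h5] at heq
            by_cases h6 : i' = j + 1
            · omega
            · rw [if_neg h6] at heq; exact absurd heq.symm (hef _ (by omega))
          · rw [if_neg h5] at heq
            by_cases h6 : i' = j + 1
            · rw [if_pos h6] at heq; exact absurd heq (hef _ (by omega))
            · rw [if_neg h6] at heq
              have := pd.hinj (show (i - 1) + 1 < t by omega)
                (show (i' - 1) + 1 < t by omega) heq; omega
  · intro i hi
    by_cases h1 : i = 0
    · rw [if_pos h1]; exact pd.hE j hj
    · rw [if_neg h1]
      by_cases h2 : i ≤ j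
      · rw [if_pos h2]; exact pd.hE _ (by omega)
      · rw [if_neg h2]
        by_cases h3 : i = j + 1
        · rw [if_pos h3]; exact heE
        · rw [if_neg h3]; exact pd.hE _ (show (i - 1) + 1 < t by omega)
  · intro i hi
    by_cases h1 : i = 0
    · rw [if_pos h1, if_pos h1]; exact hxh
    · rw [if_neg h1, if_neg h1]
      by_cases h2 : i ≤ j
      · rw [if_pos (show i ≤ j + 1 by omega), if_pos h2]
        have e1 : j + 1 - i = (j - i) + 1 := by omega
        rw [e1]; exact pd.hu2 _ (by omega)
      · rw [if_neg h2]
        by_cases h3 : i = j + 1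
        · rw [if_pos (show i ≤ j + 1 by omega), if_pos h3]
          have e1 : j + 1 - i = 0 := by omega
          rw [e1]; exact he0
        · rw [if_neg (show ¬ (i ≤ j + 1) by omega), if_neg h3]
          exact pd.hu1 _ (show (i - 1) + 1 < t by omega)
  · intro i hi
    rw [if_neg (show ¬ (i + 1 = 0) by omega)]
    by_cases h1 : i = 0
    · rw [if_pos h1, if_pos (show i + 1 ≤ j + 1 by omega), h1]
      have e1 : j + 1 - (0 + 1) = j := by omega
      rw [e1]; exact pd.hu1 j hj
    · rw [if_neg h1]
      by_cases h2 : i ≤ j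
      · rw [if_pos h2, if_pos (show i + 1 ≤ j + 1 by omega)]
        have e1 : j + 1 - (i + 1) = j - i := by omega
        rw [e1]; exact pd.hu1 _ (by omega)
      · by_cases h3 : i = j + 1
        · rw [if_neg h2, if_pos h3, if_neg (show ¬ (i + 1 ≤ j + 1) by omega)]
          have e1 : i + 1 - 1 = j + 1 := by omega
          rw [e1]; exact hej
        · rw [if_neg h2, if_neg h3, if_neg (show ¬ (i + 1 ≤ j + 1) by omega)]
          have e1 : i + 1 - 1 = (i - 1) + 1 := by omega
          rw [e1]; exact pd.hu2 _ (show (i - 1) + 1 < t by omega)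


/-! ### The main argument -/

lemma fresh_of_not_used {E : Finset (Finset V)} {t : ℕ} (pd : PD E t) {e : Finset V}
    (he : e ∉ usedSet pd) : ∀ i, i + 1 < t → pd.h i ≠ e :=
  fun i hi heq => he ((mem_usedSet pd).2 ⟨i, hi, heq⟩)

set_option maxHeartbeats 1000000 in
lemma key {E : Finset (Finset V)} (k : ℕ) (hk2 : 2 ≤ k) (hcov : IsCovering E)
    (hEk : ∀ e ∈ E, e.card ≤ k) {t : ℕ} (ht1 : 1 ≤ t) (htn : t < Fintype.card V)
    (hn : 1000000 * k ^ 6 ≤ Fintype.card V)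
    (pd0 : PD E t) (Hmax : ¬ Good E (t + 1)) : False := by
  obtain ⟨n, hndef⟩ : ∃ n, n = Fintype.card V := ⟨_, rfl⟩
  rw [← hndef] at htn hn
  have hk1 : 1 ≤ k := by omega
  have hk2' : 4 ≤ k ^ 2 := by calc (4:ℕ) = 2 ^ 2 := by norm_num
                                _ ≤ k ^ 2 := Nat.pow_le_pow_left hk2 2
  have hk3' : 8 ≤ k ^ 3 := by calc (8:ℕ) = 2 ^ 3 := by norm_num
                                _ ≤ k ^ 3 := Nat.pow_le_pow_left hk2 3
  -- leftovers exist for any path of t vertices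
  have leftover : ∀ pd : PD E t, ∃ x : V, ∀ i, i < t → pd.u i ≠ x := by
    intro pd
    have hcard : ((range t).image pd.u).card < n := by
      calc ((range t).image pd.u).card ≤ (range t).card := Finset.card_image_le
      _ = t := card_range t
      _ < n := htn
    obtain ⟨x, hxu⟩ : ∃ x : V, x ∉ (range t).image pd.u := by
      by_contra hcon
      push_neg at hcon
      have hs : (univ : Finset V) ⊆ (range t).image pd.u := fun v _ => hcon v
      have := Finset.card_le_card hs
      simp only [Finset.card_univ, ← hndef] at this
      omega
    exact ⟨x, fun i hi heq => hxu (mem_image.2 ⟨i, mem_range.2 hi, heq⟩)⟩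
  -- Step A : n ≤ 2 * k * t
  have stepA : n ≤ 2 * k * t := by
    obtain ⟨S, hSdef⟩ : ∃ S, S = usedSet pd0 := ⟨_, rfl⟩
    have hScard : S.card = t - 1 := by rw [hSdef]; exact card_usedSet pd0
    have hSE : S ⊆ E := by rw [hSdef]; exact usedSet_subset pd0
    have hcover : (univ : Finset V) ⊆ ((range t).image pd0.u) ∪ Ubar S (pd0.u (t - 1)) := by
      intro x' _
      by_cases hmem : x' ∈ (range t).image pd0.u
      · exact mem_union_left _ hmem
      · apply mem_union_right
        have hx' : ∀ i, i < t → pd0.u i ≠ x' :=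
          fun i hi heq => hmem (mem_image.2 ⟨i, mem_range.2 hi, heq⟩)
        have hne : pd0.u (t - 1) ≠ x' := hx' (t - 1) (by omega)
        obtain ⟨e, heE, he1, he2⟩ := hcov _ _ hne
        by_cases heS : e ∈ S
        · exact mem_Ubar.2 ⟨e, heS, he1, he2, fun h => hne h.symm⟩
        · refine absurd (good_extend pd0 ht1 x' hx' e heE he1 he2 ?_) Hmax
          apply fresh_of_not_used pd0
          rw [← hSdef]; exact heS
    have h1 : n ≤ t + (Ubar S (pd0.u (t - 1))).card := by
      calc n = (univ : Finset V).card := by rw [hndef, Finset.card_univ]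
      _ ≤ (((range t).image pd0.u) ∪ Ubar S (pd0.u (t - 1))).card := Finset.card_le_card hcover
      _ ≤ ((range t).image pd0.u).card + (Ubar S (pd0.u (t - 1))).card :=
          Finset.card_union_le _ _
      _ ≤ t + (Ubar S (pd0.u (t - 1))).card := by
          have h0 : ((range t).image pd0.u).card ≤ t := by
            calc _ ≤ (range t).card := Finset.card_image_le
            _ = t := card_range t
          omega
    have h2 : (Ubar S (pd0.u (t - 1))).card ≤ k * (t - 1) := by
      calc (Ubar S (pd0.u (t - 1))).card ≤ k * deg S (pd0.u (t - 1)) :=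
            card_Ubar_le k hk1 hEk hSE _
      _ ≤ k * S.card := Nat.mul_le_mul_left k (Finset.card_filter_le _ _)
      _ = k * (t - 1) := by rw [hScard]
    have h3 : k * (t - 1) ≤ k * t := Nat.mul_le_mul_left k (by omega)
    have h4 : t + k * t ≤ 2 * k * t := by nlinarith
    omega
  -- θ and the heavy set
  obtain ⟨S, hSdef⟩ : ∃ S, S = usedSet pd0 := ⟨_, rfl⟩
  have hScard : S.card = t - 1 := by rw [hSdef]; exact card_usedSet pd0
  have hSE : S ⊆ E := by rw [hSdef]; exact usedSet_subset pd0
  obtain ⟨θ, hθdef⟩ : ∃ θ, θ = t / (8 * k ^ 2) := ⟨_, rfl⟩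
  have hm : 0 < 8 * k ^ 2 := by positivity
  have hθbig : 8 * k ^ 3 + 1 ≤ θ := by
    rw [hθdef, Nat.le_div_iff_mul_le hm]
    have ha : (8 * k ^ 3 + 1) * (8 * k ^ 2) * (2 * k) ≤ 1000000 * k ^ 6 := by nlinarith
    have hb : 2 * k * ((8 * k ^ 3 + 1) * (8 * k ^ 2)) ≤ 2 * k * t := by nlinarith [stepA, hn]
    exact Nat.le_of_mul_le_mul_left hb (by omega)
  have hθt : 8 * (k ^ 2 * θ) ≤ t := by
    have hd := Nat.div_mul_le_self t (8 * k ^ 2)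
    calc 8 * (k ^ 2 * θ) = t / (8 * k ^ 2) * (8 * k ^ 2) := by rw [hθdef]; ring
    _ ≤ t := hd
  obtain ⟨Heavy, hHdef⟩ : ∃ H, H = (univ : Finset V).filter (fun v => θ + 1 ≤ deg S v) :=
    ⟨_, rfl⟩
  have hHeavy : Heavy.card ≤ 8 * k ^ 3 := by
    have h1 : Heavy.card * (θ + 1) ≤ k * (t - 1) := by
      calc Heavy.card * (θ + 1) ≤ ∑ v ∈ Heavy, deg S v := by
            have hst := Finset.card_nsmul_le_sum Heavy (fun v => deg S v) (θ + 1)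
              (fun v hv => by rw [hHdef] at hv; exact (mem_filter.1 hv).2)
            simpa using hst
      _ ≤ ∑ v : V, deg S v := Finset.sum_le_sum_of_subset (by rw [hHdef]; exact filter_subset _ _)
      _ ≤ k * S.card := sum_deg_le k hEk S hSE
      _ = k * (t - 1) := by rw [hScard]
    have h2 : t ≤ (θ + 1) * (8 * k ^ 2) := by
      have hdm := Nat.div_add_mod t (8 * k ^ 2)
      have hlt := Nat.mod_lt t hm
      calc t = 8 * k ^ 2 * (t / (8 * k ^ 2)) + t % (8 * k ^ 2) := hdm.symm
      _ ≤ 8 * k ^ 2 * θ + 8 * k ^ 2 := by rw [hθdef]; omega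
      _ = (θ + 1) * (8 * k ^ 2) := by ring
    have h3 : Heavy.card * (θ + 1) ≤ (8 * k ^ 3) * (θ + 1) := by
      calc Heavy.card * (θ + 1) ≤ k * (t - 1) := h1
      _ ≤ k * ((θ + 1) * (8 * k ^ 2)) := Nat.mul_le_mul_left k (by omega)
      _ = (8 * k ^ 3) * (θ + 1) := by ring
    exact Nat.le_of_mul_le_mul_right h3 (by omega)
  -- t is large
  have htbig : 100 ≤ t := by
    have h5 : 4 * θ ≤ k ^ 2 * θ := Nat.mul_le_mul_right θ hk2'
    have h6 : 8 * 8 + 1 ≤ 8 * k ^ 3 + 1 := by omega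
    have h7 : 65 ≤ θ := by omega
    have h8 : 4 * 65 ≤ 4 * θ := by omega
    omega
  -- Lightening rotation at the end
  have C1 : ∃ pd1 : PD E t, usedSet pd1 = S ∧ deg S (pd1.u (t - 1)) ≤ θ ∧
      pd1.u 0 = pd0.u 0 := by
    by_cases hl : deg S (pd0.u (t - 1)) ≤ θ
    · exact ⟨pd0, hSdef.symm, hl, rfl⟩
    · push_neg at hl
      obtain ⟨Iend, hIdef⟩ :
          ∃ I, I = (range (t - 2)).filter (fun i => pd0.u (t - 1) ∈ pd0.h i) := ⟨_, rfl⟩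
      have hIcard : θ ≤ Iend.card := by
        have hdeg : deg S (pd0.u (t - 1))
            = ((range (t - 1)).filter (fun i => pd0.u (t - 1) ∈ pd0.h i)).card := by
          rw [hSdef]; exact deg_eq_indices pd0 _
        have hsub : (range (t - 1)).filter (fun i => pd0.u (t - 1) ∈ pd0.h i)
            ⊆ insert (t - 2) Iend := by
          intro i hi
          obtain ⟨hir, hih⟩ := mem_filter.1 hi
          have hir' := mem_range.1 hir
          by_cases hit : i = t - 2
          · rw [hit]; exact mem_insert_self _ _
          · refine mem_insert_of_mem ?_
            rw [hIdef]
            exact mem_filter.2 ⟨mem_range.2 (by omega), hih⟩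
        have hc1 := Finset.card_le_card hsub
        have hc2 := Finset.card_insert_le (t - 2) Iend
        omega
      have hexists : ∃ i ∈ Iend, deg S (pd0.u (i + 1)) ≤ θ := by
        by_contra hcon
        push_neg at hcon
        have hsub : Iend.image (fun i => pd0.u (i + 1)) ⊆ Heavy := by
          intro v hv
          obtain ⟨i, hiI, rfl⟩ := mem_image.1 hv
          rw [hHdef]
          exact mem_filter.2 ⟨mem_univ _, hcon i hiI⟩
        have hinj : (Iend.image (fun i => pd0.u (i + 1))).card = Iend.card := by
          apply Finset.card_image_of_injOn
          intro i hi j hj heq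
          rw [hIdef] at hi hj
          have hi' := mem_range.1 (mem_filter.1 (Finset.mem_coe.1 hi)).1
          have hj' := mem_range.1 (mem_filter.1 (Finset.mem_coe.1 hj)).1
          have := pd0.uinj (show i + 1 < t by omega) (show j + 1 < t by omega) heq
          omega
        have := Finset.card_le_card hsub
        omega
      obtain ⟨i, hiI, hlight⟩ := hexists
      rw [hIdef] at hiI
      obtain ⟨hir, hih⟩ := mem_filter.1 hiI
      have hi' := mem_range.1 hir
      obtain ⟨pd1, hused, hu0, hend⟩ := rotate_end pd0 (show i + 2 < t by omega) hih
      exact ⟨pd1, by rw [hused, hSdef], by rw [hend]; exact hlight, hu0⟩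
  obtain ⟨pd1, hused1, hlt1, _⟩ := C1
  -- Lightening rotation at the start
  have C2 : ∃ pd2 : PD E t, usedSet pd2 = S ∧ deg S (pd2.u (t - 1)) ≤ θ ∧
      deg S (pd2.u 0) ≤ θ := by
    by_cases hl : deg S (pd1.u 0) ≤ θ
    · exact ⟨pd1, hused1, hlt1, hl⟩
    · push_neg at hl
      obtain ⟨Istart, hIdef⟩ :
          ∃ I, I = (range (t - 1)).filter (fun i => 1 ≤ i ∧ pd1.u 0 ∈ pd1.h i) := ⟨_, rfl⟩
      have hIcard : θ ≤ Istart.card := by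
        have hdeg : deg S (pd1.u 0)
            = ((range (t - 1)).filter (fun i => pd1.u 0 ∈ pd1.h i)).card := by
          rw [← hused1]; exact deg_eq_indices pd1 _
        have hsub : (range (t - 1)).filter (fun i => pd1.u 0 ∈ pd1.h i)
            ⊆ insert 0 Istart := by
          intro i hi
          obtain ⟨hir, hih⟩ := mem_filter.1 hi
          by_cases hiz : i = 0
          · rw [hiz]; exact mem_insert_self _ _
          · refine mem_insert_of_mem ?_
            rw [hIdef]
            exact mem_filter.2 ⟨hir, ⟨by omega, hih⟩⟩
        have hc1 := Finset.card_le_card hsub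
        have hc2 := Finset.card_insert_le 0 Istart
        omega
      have hexists : ∃ i ∈ Istart, deg S (pd1.u i) ≤ θ := by
        by_contra hcon
        push_neg at hcon
        have hsub : Istart.image (fun i => pd1.u i) ⊆ Heavy := by
          intro v hv
          obtain ⟨i, hiI, rfl⟩ := mem_image.1 hv
          rw [hHdef]
          exact mem_filter.2 ⟨mem_univ _, hcon i hiI⟩
        have hinj : (Istart.image (fun i => pd1.u i)).card = Istart.card := by
          apply Finset.card_image_of_injOn
          intro i hi j hj heq
          rw [hIdef] at hi hj
          have hi' := mem_range.1 (mem_filter.1 (Finset.mem_coe.1 hi)).1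
          have hj' := mem_range.1 (mem_filter.1 (Finset.mem_coe.1 hj)).1
          exact pd1.uinj (by omega) (by omega) heq
        have := Finset.card_le_card hsub
        omega
      obtain ⟨i, hiI, hlight⟩ := hexists
      rw [hIdef] at hiI
      have hir := (mem_filter.1 hiI).1
      have hi1 := (mem_filter.1 hiI).2.1
      have hi2 := (mem_filter.1 hiI).2.2
      have hi' := mem_range.1 hir
      obtain ⟨pd2, hused, hu0, hend⟩ := rotate_start pd1 hi1 (show i + 1 < t by omega) hi2
      refine ⟨pd2, by rw [hused, hused1], ?_, ?_⟩
      · rw [hend]; exact hlt1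
      · rw [hu0]; exact hlight
  obtain ⟨pd, husedS, hlend, hlstart⟩ := C2
  -- the leftover vertex
  obtain ⟨x, hx⟩ := leftover pd
  have hfreshS : ∀ e : Finset V, e ∉ S → ∀ i, i + 1 < t → pd.h i ≠ e := by
    intro e he
    exact fresh_of_not_used pd (by rw [husedS]; exact he)
  -- Step E : every used edge through x points into Ubar S (u 0)
  have stepE : ∀ j, j + 1 < t → x ∈ pd.h j → pd.u (j + 1) ∈ Ubar S (pd.u 0) := by
    intro j hj hxj
    have hne : pd.u 0 ≠ pd.u (j + 1) := by
      intro heq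
      have := pd.uinj (show 0 < t by omega) (show j + 1 < t by omega) heq
      omega
    obtain ⟨e, heE, he0, hej⟩ := hcov _ _ hne
    by_cases heS : e ∈ S
    · exact mem_Ubar.2 ⟨e, heS, he0, hej, fun h => hne h.symm⟩
    · exact absurd (good_splice pd hj x hx hxj e heE he0 hej (hfreshS e heS)) Hmax
  have hdegx : deg S x ≤ k * θ := by
    have hdeg : deg S x = ((range (t - 1)).filter (fun i => x ∈ pd.h i)).card := by
      rw [← husedS]; exact deg_eq_indices pd x
    have hle : ((range (t - 1)).filter (fun i => x ∈ pd.h i)).card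
        ≤ (Ubar S (pd.u 0)).card := by
      apply Finset.card_le_card_of_injOn (fun i => pd.u (i + 1))
      · intro i hi
        obtain ⟨hir, hih⟩ := mem_filter.1 hi
        exact stepE i (by have := mem_range.1 hir; omega) hih
      · intro i hi j hj heq
        have hi' := mem_range.1 (mem_filter.1 (Finset.mem_coe.1 hi)).1
        have hj' := mem_range.1 (mem_filter.1 (Finset.mem_coe.1 hj)).1
        have := pd.uinj (show i + 1 < t by omega) (show j + 1 < t by omega) heq
        omega
    calc deg S x = _ := hdeg
    _ ≤ (Ubar S (pd.u 0)).card := hle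
    _ ≤ k * deg S (pd.u 0) := card_Ubar_le k hk1 hEk hSE _
    _ ≤ k * θ := Nat.mul_le_mul_left k hlstart
  -- Step D : the rotation-extension inequality
  have stepD : ∀ j, j + 2 < t →
      pd.u j ∈ Ubar S (pd.u (t - 1)) ∨ pd.u (j + 1) ∈ Ubar S x := by
    intro j hj
    by_contra hcon
    push_neg at hcon
    obtain ⟨hcon1, hcon2⟩ := hcon
    have hne : pd.u j ≠ pd.u (t - 1) := by
      intro heq
      have := pd.uinj (show j < t by omega) (show t - 1 < t by omega) heq
      omega
    obtain ⟨e, heE, hej, het⟩ := hcov _ _ hne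
    by_cases heS : e ∈ S ∧ e ≠ pd.h j
    · exact hcon1 (mem_Ubar.2 ⟨e, heS.1, het, hej, hne⟩)
    · have he' : e ∉ S ∨ e = pd.h j := by tauto
      have hnex : pd.u (j + 1) ≠ x := hx (j + 1) (by omega)
      obtain ⟨c, hcE, hcj, hcx⟩ := hcov _ _ hnex
      by_cases hcS : c ∈ S
      · exact hcon2 (mem_Ubar.2 ⟨c, hcS, hcx, hcj, hnex⟩)
      · by_cases hce : c = e
        · have het' : pd.u (t - 1) ∈ c := by rw [hce]; exact het
          exact absurd (good_extend pd ht1 x hx c hcE het' hcx (hfreshS c hcS)) Hmax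
        · have hef : ∀ i, i + 1 < t → i ≠ j → pd.h i ≠ e := by
            intro i hi hij heq
            rcases he' with h | h
            · exact hfreshS e h i hi heq
            · rw [h] at heq
              exact hij (pd.hinj hi (by omega) heq)
          have hcf : ∀ i, i + 1 < t → i ≠ j → pd.h i ≠ c :=
            fun i hi _ heq => hfreshS c hcS i hi heq
          exact absurd (good_rotate_extend pd hj x hx e c heE hcE hej het hcj hcx
            hef hcf hce) Hmax
  -- Counting for step D
  have hDcount : t - 2 ≤ k * θ + k * (k * θ) := by
    obtain ⟨A, hAdef⟩ :
        ∃ A, A = (range (t - 2)).filter (fun j => pd.u j ∈ Ubar S (pd.u (t - 1))) := ⟨_, rfl⟩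
    obtain ⟨B, hBdef⟩ :
        ∃ B, B = (range (t - 2)).filter (fun j => pd.u (j + 1) ∈ Ubar S x) := ⟨_, rfl⟩
    have hsub : range (t - 2) ⊆ A ∪ B := by
      intro j hj
      have hj' := mem_range.1 hj
      rcases stepD j (by omega) with h | h
      · exact mem_union_left _ (by rw [hAdef]; exact mem_filter.2 ⟨hj, h⟩)
      · exact mem_union_right _ (by rw [hBdef]; exact mem_filter.2 ⟨hj, h⟩)
    have hA : A.card ≤ k * θ := by
      have h1 : A.card ≤ (Ubar S (pd.u (t - 1))).card := by
        apply Finset.card_le_card_of_injOn (fun j => pd.u j)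
        · intro j hjA; rw [hAdef] at hjA; exact (mem_filter.1 hjA).2
        · intro i hi j hj heq
          rw [hAdef] at hi hj
          have hi' := mem_range.1 (mem_filter.1 (Finset.mem_coe.1 hi)).1
          have hj' := mem_range.1 (mem_filter.1 (Finset.mem_coe.1 hj)).1
          exact pd.uinj (by omega) (by omega) heq
      calc A.card ≤ (Ubar S (pd.u (t - 1))).card := h1
      _ ≤ k * deg S (pd.u (t - 1)) := card_Ubar_le k hk1 hEk hSE _
      _ ≤ k * θ := Nat.mul_le_mul_left k hlend
    have hB : B.card ≤ k * (k * θ) := by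
      have h1 : B.card ≤ (Ubar S x).card := by
        apply Finset.card_le_card_of_injOn (fun j => pd.u (j + 1))
        · intro j hjB; rw [hBdef] at hjB; exact (mem_filter.1 hjB).2
        · intro i hi j hj heq
          rw [hBdef] at hi hj
          have hi' := mem_range.1 (mem_filter.1 (Finset.mem_coe.1 hi)).1
          have hj' := mem_range.1 (mem_filter.1 (Finset.mem_coe.1 hj)).1
          have := pd.uinj (show i + 1 < t by omega) (show j + 1 < t by omega) heq
          omega
      calc B.card ≤ (Ubar S x).card := h1
      _ ≤ k * deg S x := card_Ubar_le k hk1 hEk hSE _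
      _ ≤ k * (k * θ) := Nat.mul_le_mul_left k hdegx
    have hcu := Finset.card_union_le A B
    have hcc := Finset.card_le_card hsub
    have hcr := card_range (t - 2)
    omega
  -- The final numeric contradiction
  have hfin1 : t - 2 ≤ 2 * (k ^ 2 * θ) := by
    have h1 : k * θ ≤ k ^ 2 * θ := Nat.mul_le_mul_right θ (by nlinarith)
    have h2 : k * (k * θ) = k ^ 2 * θ := by ring
    omega
  have hfin2 : 4 ≤ k ^ 2 * θ := by
    have h1 : 4 * 1 ≤ k ^ 2 * θ := Nat.mul_le_mul hk2' (by omega)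
    omega
  omega

end BergePf

/-- For every `k ≥ 2` there is `n₀ = n₀(k)` such that for every `R ⊆ {1, …, k}`,
every covering `R`-uniform hypergraph on `n ≥ n₀` vertices contains a
Hamiltonian Berge path. -/
theorem covering_R_graph_hamiltonian_berge_path (k : ℕ) (hk : 2 ≤ k) :
    ∃ n₀ : ℕ, ∀ (V : Type) [Fintype V] [DecidableEq V] (R : Finset ℕ),
      R ⊆ Finset.Icc 1 k →
      ∀ E : Finset (Finset V), (∀ e ∈ E, e.card ∈ R) → IsCovering E →
        n₀ ≤ Fintype.card V →
        HasBergePath E (Fintype.card V) := by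
  refine ⟨1000000 * k ^ 6, ?_⟩
  intro V _ _ R hR E hER hcov hn
  have hEk : ∀ e ∈ E, e.card ≤ k := by
    intro e he
    exact (Finset.mem_Icc.1 (hR (hER e he))).2
  have hk6 : 1 ≤ k ^ 6 := Nat.one_le_pow 6 k (by omega)
  have hn1 : 1 ≤ Fintype.card V := by
    have : 1 ≤ 1000000 * k ^ 6 := by nlinarith
    omega
  obtain ⟨v0⟩ : Nonempty V := Fintype.card_pos_iff.1 (by omega)
  letI : DecidablePred (fun t => BergePf.Good E t) :=
    Classical.decPred _
  set t := Nat.findGreatest (fun t => BergePf.Good E t) (Fintype.card V) with htdef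
  have hP1 : BergePf.Good E 1 := BergePf.good_one E v0
  have hPt : BergePf.Good E t := Nat.findGreatest_spec hn1 hP1
  have ht1 : 1 ≤ t := Nat.le_findGreatest hn1 hP1
  have htle : t ≤ Fintype.card V := Nat.findGreatest_le _
  by_cases hteq : t = Fintype.card V
  · rw [← hteq]
    exact BergePf.good_to_hbp hPt
  · exfalso
    have htlt : t < Fintype.card V := by omega
    obtain ⟨pd0⟩ := hPt
    apply BergePf.key k hk hcov hEk ht1 htlt hn pd0
    intro hgood
    have hgr : ¬ (fun t => BergePf.Good E t) (t + 1) :=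
      Nat.findGreatest_is_greatest (P := fun t => BergePf.Good E t)
        (n := Fintype.card V) (k := t + 1) (by omega) (by omega)
    exact hgr hgood
end

section
/- Let t and n be integers with n ≥ t ≥ 4. Every 3-uniform hypergraph H on n vertices that contains no Berge path with t base vertices satisfies λ(H) ≤ C(t−1, 3)/(t−1)^3, where C(t−1,3) is the binomial coefficient. -/
/-- The polynomial form `P_H(x) = ∑_{e ∈ E} ∏_{i ∈ e} x i` of a hypergraph on `Fin n`. -/
noncomputable def polyForm {n : ℕ} (E : Finset (Finset (Fin n))) (x : Fin n → ℝ) : ℝ :=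
  ∑ e ∈ E, ∏ i ∈ e, x i

set_option linter.unusedVariables false
set_option linter.unusedSectionVars false
set_option maxHeartbeats 1000000

section auxiliary
open Finset
variable {V : Type*} [DecidableEq V]


lemma cast_choose3 (m : ℕ) (hm : 3 ≤ m) :
    (m.choose 3 : ℝ) = (m : ℝ) * ((m : ℝ) - 1) * ((m : ℝ) - 2) / 6 := by
  have h : m.descFactorial 3 = 6 * m.choose 3 := by
    rw [Nat.descFactorial_eq_factorial_mul_choose]; norm_num [Nat.factorial]
  have h2 : m.descFactorial 3 = m * (m - 1) * (m - 2) := by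
    simp [Nat.descFactorial_succ, Nat.descFactorial_zero]; ring
  have h3 : (6 : ℝ) * (m.choose 3 : ℝ) = (m : ℝ) * ((m : ℝ) - 1) * ((m : ℝ) - 2) := by
    have h4 : 6 * m.choose 3 = m * (m - 1) * (m - 2) := h.symm.trans h2
    have := congrArg (fun k : ℕ => (k : ℝ)) h4
    push_cast [Nat.cast_sub (by omega : 1 ≤ m), Nat.cast_sub (by omega : 2 ≤ m)] at this
    linarith [this]
  linarith

lemma tangent3 (a c : ℝ) (ha : 0 ≤ a) (ha1 : a ≤ 1) (hc : 0 < c) (hc4 : c ≤ 1/4) :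
    3*c^2 - 2*c^3 + (6*c - 6*c^2) * (a - c) ≤ 3*a^2 - 2*a^3 := by
  nlinarith [mul_nonneg (sq_nonneg (a - c)) (show (0:ℝ) ≤ 3/2 - 2*c - a by linarith)]



lemma pc_insert_sum (a : V) (S : Finset V) (ha : a ∉ S) (x : V → ℝ) (k : ℕ) :
    ∑ e ∈ (insert a S).powersetCard (k+1), ∏ i ∈ e, x i
      = ∑ e ∈ S.powersetCard (k+1), ∏ i ∈ e, x i
        + x a * ∑ e ∈ S.powersetCard k, ∏ i ∈ e, x i := by
  rw [Finset.powersetCard_succ_insert ha, Finset.sum_union, Finset.sum_image, Finset.mul_sum]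
  · congr 1
    refine Finset.sum_congr rfl fun e he => ?_
    rw [Finset.prod_insert (fun hae => ha ((Finset.mem_powersetCard.1 he).1 hae))]
  · intro e he f hf hef
    have hae : a ∉ e := fun h => ha ((Finset.mem_powersetCard.1 he).1 h)
    have haf : a ∉ f := fun h => ha ((Finset.mem_powersetCard.1 hf).1 h)
    rw [← Finset.erase_insert hae, ← Finset.erase_insert haf, hef]
  · rw [Finset.disjoint_right]
    intro e he hee
    obtain ⟨f, hf, rfl⟩ := Finset.mem_image.1 he
    exact ha ((Finset.mem_powersetCard.1 hee).1 (Finset.mem_insert_self a f))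

lemma pc1_sum (S : Finset V) (x : V → ℝ) :
    ∑ e ∈ S.powersetCard 1, ∏ i ∈ e, x i = ∑ i ∈ S, x i := by
  rw [Finset.powersetCard_one, Finset.sum_map]
  simp

lemma pc_big_empty (k : ℕ) (hk : 0 < k) :
    ((∅ : Finset V).powersetCard k) = ∅ := by
  rw [Finset.powersetCard_eq_empty]; simpa

lemma esymm2_id (S : Finset V) (x : V → ℝ) :
    2 * ∑ e ∈ S.powersetCard 2, ∏ i ∈ e, x i
      = (∑ i ∈ S, x i)^2 - ∑ i ∈ S, (x i)^2 := by
  induction S using Finset.induction_on with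
  | empty => rw [pc_big_empty 2 (by norm_num)]; simp
  | @insert a S ha ih =>
    rw [show (2:ℕ) = 1 + 1 from rfl, pc_insert_sum a S ha x 1, pc1_sum,
      Finset.sum_insert ha, Finset.sum_insert ha]
    rw [show (1+1 : ℕ) = 2 from rfl] at *
    linear_combination ih

lemma esymm3_id (S : Finset V) (x : V → ℝ) :
    6 * ∑ e ∈ S.powersetCard 3, ∏ i ∈ e, x i
      = (∑ i ∈ S, x i)^3 - 3 * (∑ i ∈ S, x i) * (∑ i ∈ S, (x i)^2)
        + 2 * ∑ i ∈ S, (x i)^3 := by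
  induction S using Finset.induction_on with
  | empty => rw [pc_big_empty 3 (by norm_num)]; simp
  | @insert a S ha ih =>
    rw [show (3:ℕ) = 2 + 1 from rfl, pc_insert_sum a S ha x 2,
      Finset.sum_insert ha, Finset.sum_insert ha, Finset.sum_insert ha]
    rw [show (2+1 : ℕ) = 3 from rfl] at *
    linear_combination ih + 3 * (x a) * esymm2_id S x

lemma esymm3_le (S : Finset V) (x : V → ℝ) (m : ℕ) (hm : 3 ≤ m) (hcard : S.card = m)
    (hx : ∀ i ∈ S, 0 ≤ x i) (hsum : ∑ i ∈ S, x i = 1) :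
    ∑ e ∈ S.powersetCard 3, ∏ i ∈ e, x i ≤ (m.choose 3 : ℝ) / (m : ℝ)^3 := by
  rcases eq_or_lt_of_le hm with hm3 | hm4
  · -- m = 3
    obtain ⟨a, b, c, hab, hac, hbc, rfl⟩ := Finset.card_eq_three.1 (by omega : S.card = 3)
    rw [show ({a,b,c} : Finset V).powersetCard 3 = {({a,b,c} : Finset V)} by
      have : ({a,b,c} : Finset V).card = 3 := Finset.card_eq_three.2 ⟨a,b,c,hab,hac,hbc,rfl⟩
      rw [← this, Finset.powersetCard_self]]
    rw [Finset.sum_singleton, Finset.prod_insert (by simp [hab, hac]),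
      Finset.prod_insert (by simp [hbc]), Finset.prod_singleton]
    rw [Finset.sum_insert (by simp [hab, hac]), Finset.sum_insert (by simp [hbc]),
      Finset.sum_singleton] at hsum
    have ha := hx a (by simp); have hb := hx b (by simp); have hc := hx c (by simp)
    rw [← hm3]
    norm_num
    nlinarith [sq_nonneg (x a - x b), sq_nonneg (x b - x c), sq_nonneg (x a - x c),
      mul_nonneg (hx a (by simp)) (hx b (by simp)),
      mul_nonneg (hx b (by simp)) (hx c (by simp)),
      mul_nonneg (hx a (by simp)) (hx c (by simp))]
  · -- m ≥ 4
    have hm' : (4 : ℝ) ≤ (m : ℝ) := by exact_mod_cast hm4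
    have hmpos : (0 : ℝ) < m := by linarith
    set c : ℝ := 1 / (m : ℝ) with hc
    have hc0 : 0 < c := by positivity
    have hc4 : c ≤ 1/4 := by
      rw [hc, div_le_div_iff₀ hmpos (by norm_num)]; linarith
    have hx1 : ∀ i ∈ S, x i ≤ 1 := by
      intro i hi
      calc x i ≤ ∑ j ∈ S, x j := Finset.single_le_sum hx hi
      _ = 1 := hsum
    have key : ∀ i ∈ S, 3*c^2 - 2*c^3 + (6*c - 6*c^2) * (x i - c) ≤ 3*(x i)^2 - 2*(x i)^3 :=
      fun i hi => tangent3 (x i) c (hx i hi) (hx1 i hi) hc0 hc4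
    have hsum2 : (m : ℝ) * (3*c^2 - 2*c^3) ≤ 3 * (∑ i ∈ S, (x i)^2) - 2 * (∑ i ∈ S, (x i)^3) := by
      have := Finset.sum_le_sum key
      rw [Finset.sum_add_distrib] at this
      simp only [Finset.sum_const, hcard, nsmul_eq_mul, ← Finset.mul_sum,
        Finset.sum_sub_distrib] at this
      have hmc : (m : ℝ) * c = 1 := by rw [hc]; field_simp
      rw [hsum, hmc] at this
      linarith
    have hid := esymm3_id S x
    rw [hsum] at hid
    have h6 : 6 * ∑ e ∈ S.powersetCard 3, ∏ i ∈ e, x i ≤ 1 - (m:ℝ)*(3*c^2 - 2*c^3) := by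
      rw [hid]; nlinarith [hsum2]
    rw [cast_choose3 m hm]
    have : 1 - (m:ℝ)*(3*c^2 - 2*c^3) = 6 * ((m:ℝ) * ((m:ℝ)-1) * ((m:ℝ)-2) / 6 / (m:ℝ)^3) := by
      rw [hc]; field_simp; ring
    linarith [h6, this ▸ h6]



lemma exists_long_path (E : Finset (Finset V)) (hunif : ∀ e ∈ E, e.card = 3)
    (S : Finset V)
    (hcov : ∀ a ∈ S, ∀ b ∈ S, a ≠ b → ∃ e ∈ E, a ∈ e ∧ b ∈ e)
    (hS4 : 4 ≤ S.card) :
    ∀ k, 2 ≤ k → k ≤ S.card →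
      ∃ (v : ℕ → V) (h : ℕ → Finset V),
        (∀ i j, i < k → j < k → v i = v j → i = j) ∧
        (∀ i j, i < k - 1 → j < k - 1 → h i = h j → i = j) ∧
        (∀ i, i < k → v i ∈ S) ∧
        (∀ i, i < k - 1 → h i ∈ E ∧ v i ∈ h i ∧ v (i + 1) ∈ h i) := by
  intro k hk2
  induction k, hk2 using Nat.le_induction with
  | base =>
    intro _hS
    obtain ⟨a, ha, b, hb, hab⟩ := Finset.one_lt_card.1 (by omega : 1 < S.card)
    obtain ⟨e, he, hae, hbe⟩ := hcov a ha b hb hab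
    refine ⟨fun i => if i = 0 then a else b, fun _ => e, ?_, ?_, ?_, ?_⟩
    · intro i j hi hj hij
      by_cases h0 : i = 0 <;> by_cases h1 : j = 0
      · omega
      · simp [h0, h1] at hij
        first | exact absurd hij hab | exact absurd hij.symm hab
      · simp [h0, h1] at hij
        first | exact absurd hij hab | exact absurd hij.symm hab
      · omega
    · intro i j hi hj _; omega
    · intro i hi; by_cases h0 : i = 0 <;> simp [h0, ha, hb]
    · intro i hi
      have : i = 0 := by omega
      simp [this, he, hae, hbe]
  | succ k hk2 ih =>
    intro hk1
    obtain ⟨v, h, hvinj, hhinj, hvS, hcond⟩ := ih (by omega)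
    have hcard : ((Finset.range k).image v).card < S.card := by
      calc ((Finset.range k).image v).card ≤ k := by
            simpa using Finset.card_image_le (s := Finset.range k) (f := v)
        _ < S.card := by omega
    have hucand : ∃ u ∈ S, u ∉ (Finset.range k).image v := by
      by_contra hcon
      push_neg at hcon
      exact absurd (Finset.card_le_card hcon) (by omega)
    obtain ⟨u, huS, hunew⟩ := hucand
    have hune : ∀ i, i < k → v i ≠ u := by
      intro i hi hvi
      exact hunew (Finset.mem_image.2 ⟨i, Finset.mem_range.2 hi, hvi⟩)
    by_cases HA : ∃ e ∈ E, v (k-1) ∈ e ∧ u ∈ e ∧ ∀ i, i < k - 1 → e ≠ h i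
    · -- append u at the end
      obtain ⟨e, heE, hvk, hue, hfresh⟩ := HA
      refine ⟨fun i => if i = k then u else v i, fun i => if i = k - 1 then e else h i,
        ?_, ?_, ?_, ?_⟩
      · intro i j hi hj hij
        by_cases h0 : i = k <;> by_cases h1 : j = k
        · omega
        · simp [h0, h1] at hij
          first | exact absurd hij (hune j (by omega)) | exact absurd hij.symm (hune j (by omega))
        · simp [h0, h1] at hij
          first | exact absurd hij (hune i (by omega)) | exact absurd hij.symm (hune i (by omega))
        · simp [h0, h1] at hij; exact hvinj i j (by omega) (by omega) hij
      · intro i j hi hj hij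
        simp only [Nat.add_sub_cancel] at hi hj
        by_cases h0 : i = k - 1 <;> by_cases h1 : j = k - 1
        · omega
        · simp [h0, h1] at hij
          first | exact absurd hij (hfresh j (by omega)) | exact absurd hij.symm (hfresh j (by omega))
        · simp [h0, h1] at hij
          first | exact absurd hij (hfresh i (by omega)) | exact absurd hij.symm (hfresh i (by omega))
        · simp [h0, h1] at hij; exact hhinj i j (by omega) (by omega) hij
      · intro i hi
        by_cases h0 : i = k <;> simp [h0, huS]
        exact hvS i (by omega)
      · intro i hi
        simp only [Nat.add_sub_cancel] at hi
        by_cases h0 : i = k - 1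
        · subst h0
          simp [show k - 1 ≠ k by omega, show k - 1 + 1 = k by omega]
          exact ⟨heE, hvk, hue⟩
        · simp [h0, show i ≠ k by omega, show i + 1 ≠ k by omega]
          exact hcond i (by omega)
    · by_cases HB : ∃ e ∈ E, v 0 ∈ e ∧ u ∈ e ∧ ∀ i, i < k - 1 → e ≠ h i
      · -- prepend u at the beginning
        obtain ⟨e, heE, hv0, hue, hfresh⟩ := HB
        refine ⟨fun i => if i = 0 then u else v (i-1), fun i => if i = 0 then e else h (i-1),
          ?_, ?_, ?_, ?_⟩
        · intro i j hi hj hij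
          by_cases h0 : i = 0 <;> by_cases h1 : j = 0
          · omega
          · simp [h0, h1] at hij
            first
            | exact absurd hij (hune (j-1) (by omega)).symm
            | exact absurd hij.symm (hune (j-1) (by omega)).symm
            | exact absurd hij (hune (j-1) (by omega))
            | exact absurd hij.symm (hune (j-1) (by omega))
          · simp [h0, h1] at hij
            first
            | exact absurd hij (hune (i-1) (by omega)).symm
            | exact absurd hij.symm (hune (i-1) (by omega)).symm
            | exact absurd hij (hune (i-1) (by omega))
            | exact absurd hij.symm (hune (i-1) (by omega))
          · simp [h0, h1] at hij
            have := hvinj (i-1) (j-1) (by omega) (by omega) hij; omega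
        · intro i j hi hj hij
          simp only [Nat.add_sub_cancel] at hi hj
          by_cases h0 : i = 0 <;> by_cases h1 : j = 0
          · omega
          · simp [h0, h1] at hij
            first | exact absurd hij (hfresh (j-1) (by omega)) | exact absurd hij.symm (hfresh (j-1) (by omega))
          · simp [h0, h1] at hij
            first | exact absurd hij (hfresh (i-1) (by omega)) | exact absurd hij.symm (hfresh (i-1) (by omega))
          · simp [h0, h1] at hij
            have := hhinj (i-1) (j-1) (by omega) (by omega) hij; omega
        · intro i hi
          by_cases h0 : i = 0 <;> simp [h0, huS]
          exact hvS (i-1) (by omega)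
        · intro i hi
          simp only [Nat.add_sub_cancel] at hi
          by_cases h0 : i = 0
          · simp [h0, heE, hue, hv0]
          · simp [h0, show i + 1 ≠ 0 by omega]
            have := hcond (i-1) (by omega)
            rw [show i - 1 + 1 = i from by omega] at this
            exact ⟨this.1, this.2.1, this.2.2⟩
      · -- both ends blocked
        push_neg at HA HB
        have hlast : h (k-2) = {v (k-2), v (k-1), u} := by
          obtain ⟨e, heE, hvke, hue⟩ := hcov (v (k-1)) (hvS (k-1) (by omega)) u huS
            (hune (k-1) (by omega))
          obtain ⟨i, hik, rfl⟩ := HA e heE hvke hue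
          have hcond' := hcond i hik
          have hcard3 := hunif _ hcond'.1
          have hvk : v (k-1) = v i ∨ v (k-1) = v (i+1) := by
            by_contra hcon
            push_neg at hcon
            have hsub : {v i, v (i+1), v (k-1), u} ⊆ h i := by
              intro z hz
              simp only [Finset.mem_insert, Finset.mem_singleton] at hz
              rcases hz with rfl | rfl | rfl | rfl
              exacts [hcond'.2.1, hcond'.2.2, hvke, hue]
            have hc4 : ({v i, v (i+1), v (k-1), u} : Finset V).card = 4 := by
              rw [Finset.card_insert_of_notMem, Finset.card_insert_of_notMem,
                Finset.card_insert_of_notMem, Finset.card_singleton]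
              · simp only [Finset.mem_singleton]
                exact hune (k-1) (by omega)
              · simp only [Finset.mem_insert, Finset.mem_singleton]
                push_neg
                exact ⟨fun hh => hcon.2 hh.symm, hune (i+1) (by omega)⟩
              · simp only [Finset.mem_insert, Finset.mem_singleton]
                push_neg
                refine ⟨fun hh => ?_, fun hh => hcon.1 hh.symm, hune i (by omega)⟩
                have := hvinj i (i+1) (by omega) (by omega) hh; omega
            have := Finset.card_le_card hsub
            omega
          have hieq : i = k - 2 := by
            rcases hvk with hh | hh
            · have := hvinj (k-1) i (by omega) (by omega) hh; omega
            · have := hvinj (k-1) (i+1) (by omega) (by omega) hh; omega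
          subst hieq
          have hcond2 := hcond (k-2) (by omega)
          rw [show k - 2 + 1 = k - 1 from by omega] at hcond2
          have hsub : ({v (k-2), v (k-1), u} : Finset V) ⊆ h (k-2) :=
            Finset.insert_subset hcond2.2.1 (Finset.insert_subset hcond2.2.2
              (Finset.singleton_subset_iff.2 hue))
          refine (Finset.eq_of_subset_of_card_le hsub ?_).symm
          rw [hunif _ hcond2.1]
          rw [Finset.card_insert_of_notMem, Finset.card_insert_of_notMem,
            Finset.card_singleton]
          · simp only [Finset.mem_singleton]; exact hune (k-1) (by omega)
          · simp only [Finset.mem_insert, Finset.mem_singleton]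
            push_neg
            refine ⟨fun hh => ?_, hune (k-2) (by omega)⟩
            have := hvinj (k-2) (k-1) (by omega) (by omega) hh; omega
        have hfirst : h 0 = {v 0, v 1, u} := by
          obtain ⟨e, heE, hv0e, hue⟩ := hcov (v 0) (hvS 0 (by omega)) u huS
            (hune 0 (by omega))
          obtain ⟨i, hik, rfl⟩ := HB e heE hv0e hue
          have hcond' := hcond i hik
          have hcard3 := hunif _ hcond'.1
          have hv0' : v 0 = v i ∨ v 0 = v (i+1) := by
            by_contra hcon
            push_neg at hcon
            have hsub : {v i, v (i+1), v 0, u} ⊆ h i := by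
              intro z hz
              simp only [Finset.mem_insert, Finset.mem_singleton] at hz
              rcases hz with rfl | rfl | rfl | rfl
              exacts [hcond'.2.1, hcond'.2.2, hv0e, hue]
            have hc4 : ({v i, v (i+1), v 0, u} : Finset V).card = 4 := by
              rw [Finset.card_insert_of_notMem, Finset.card_insert_of_notMem,
                Finset.card_insert_of_notMem, Finset.card_singleton]
              · simp only [Finset.mem_singleton]
                exact hune 0 (by omega)
              · simp only [Finset.mem_insert, Finset.mem_singleton]
                push_neg
                exact ⟨fun hh => hcon.2 hh.symm, hune (i+1) (by omega)⟩
              · simp only [Finset.mem_insert, Finset.mem_singleton]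
                push_neg
                refine ⟨fun hh => ?_, fun hh => hcon.1 hh.symm, hune i (by omega)⟩
                have := hvinj i (i+1) (by omega) (by omega) hh; omega
            have := Finset.card_le_card hsub
            omega
          have hieq : i = 0 := by
            rcases hv0' with hh | hh
            · have := hvinj 0 i (by omega) (by omega) hh; omega
            · have := hvinj 0 (i+1) (by omega) (by omega) hh; omega
          subst hieq
          have hcond2 := hcond 0 (by omega)
          have hsub : ({v 0, v 1, u} : Finset V) ⊆ h 0 :=
            Finset.insert_subset hcond2.2.1 (Finset.insert_subset hcond2.2.2
              (Finset.singleton_subset_iff.2 hue))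
          refine (Finset.eq_of_subset_of_card_le hsub ?_).symm
          rw [hunif _ hcond2.1]
          rw [Finset.card_insert_of_notMem, Finset.card_insert_of_notMem,
            Finset.card_singleton]
          · simp only [Finset.mem_singleton]; exact hune 1 (by omega)
          · simp only [Finset.mem_insert, Finset.mem_singleton]
            push_neg
            refine ⟨fun hh => ?_, hune 0 (by omega)⟩
            have := hvinj 0 1 (by omega) (by omega) hh; omega
        by_cases hk3 : k = 2
        · -- k = 2 : use a fourth vertex w
          subst hk3
          have hcard' : ({v 0, v 1, u} : Finset V).card < S.card := by
            have h3 : ({v 0, v 1, u} : Finset V).card ≤ 3 :=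
              le_trans (Finset.card_insert_le _ _)
                (by simpa using Nat.add_le_add_right (Finset.card_insert_le (v 1) {u}) 1)
            omega
          have hwcand : ∃ w ∈ S, w ∉ ({v 0, v 1, u} : Finset V) := by
            by_contra hcon
            push_neg at hcon
            exact absurd (Finset.card_le_card hcon) (by omega)
          obtain ⟨w, hwS, hwnew⟩ := hwcand
          simp only [Finset.mem_insert, Finset.mem_singleton] at hwnew
          push_neg at hwnew
          obtain ⟨hwv0, hwv1, hwu⟩ := hwnew
          obtain ⟨f, hfE, huf, hwf⟩ := hcov u huS w hwS (fun hh => hwu hh.symm)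
          have hfh0 : f ≠ h 0 := by
            intro hh
            rw [hh, hfirst] at hwf
            simp only [Finset.mem_insert, Finset.mem_singleton] at hwf
            rcases hwf with hh' | hh' | hh' <;> [exact hwv0 hh'; exact hwv1 hh'; exact hwu hh']
          have hcond0 := hcond 0 (by omega)
          refine ⟨fun i => if i = 0 then w else if i = 1 then u else v 0,
            fun i => if i = 0 then f else h 0, ?_, ?_, ?_, ?_⟩
          · intro i j hi hj hij
            interval_cases i <;> interval_cases j <;> [rfl; skip; skip; skip; rfl; skip;
              skip; skip; rfl] <;>
              (norm_num at hij ⊢) <;>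
              first
              | exact absurd hij hwu | exact absurd hij.symm hwu
              | exact absurd hij hwv0 | exact absurd hij.symm hwv0
              | exact absurd hij (hune 0 (by omega)) | exact absurd hij.symm (hune 0 (by omega))
              | exact absurd hij (hune 0 (by omega)).symm
              | exact absurd hij.symm ((hune 0 (by omega)).symm)
          · intro i j hi hj hij
            simp only [Nat.add_sub_cancel] at hi hj
            interval_cases i <;> interval_cases j <;> [rfl; skip; skip; rfl] <;>
              (norm_num at hij ⊢) <;>
              first | exact absurd hij hfh0 | exact absurd hij.symm hfh0
          · intro i hi
            interval_cases i <;> norm_num [hwS, huS, hvS 0 (by omega)]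
          · intro i hi
            simp only [Nat.add_sub_cancel] at hi
            interval_cases i
            · norm_num
              exact ⟨hfE, hwf, huf⟩
            · norm_num
              refine ⟨hcond0.1, ?_, hcond0.2.1⟩
              rw [hfirst]; simp
        · -- k ≥ 3 : rotate
          have hk3' : 3 ≤ k := by omega
          obtain ⟨e, heE, hv0e, hvke⟩ := hcov (v 0) (hvS 0 (by omega)) (v (k-1))
            (hvS (k-1) (by omega))
            (fun hh => by have := hvinj 0 (k-1) (by omega) (by omega) hh; omega)
          have hefresh : ∀ i, i < k - 1 → e ≠ h i := by
            intro i hik hh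
            subst hh
            have hcond' := hcond i hik
            by_cases hi0 : i = 0
            · subst hi0
              rw [hfirst] at hvke
              simp only [Finset.mem_insert, Finset.mem_singleton] at hvke
              rcases hvke with hh | hh | hh
              · have := hvinj (k-1) 0 (by omega) (by omega) hh; omega
              · have := hvinj (k-1) 1 (by omega) (by omega) hh; omega
              · exact hune (k-1) (by omega) hh
            · by_cases hik2 : i = k - 2
              · subst hik2
                rw [hlast] at hv0e
                simp only [Finset.mem_insert, Finset.mem_singleton] at hv0e
                rcases hv0e with hh | hh | hh
                · have := hvinj 0 (k-2) (by omega) (by omega) hh; omega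
                · have := hvinj 0 (k-1) (by omega) (by omega) hh; omega
                · first | exact hune 0 (by omega) hh | exact hune 0 (by omega) hh.symm
              · have hcard3 := hunif _ hcond'.1
                have hsub : {v i, v (i+1), v 0, v (k-1)} ⊆ h i := by
                  intro z hz
                  simp only [Finset.mem_insert, Finset.mem_singleton] at hz
                  rcases hz with rfl | rfl | rfl | rfl
                  exacts [hcond'.2.1, hcond'.2.2, hv0e, hvke]
                have hc4 : ({v i, v (i+1), v 0, v (k-1)} : Finset V).card = 4 := by
                  have d1 : v i ≠ v (i+1) := fun hh => by
                    have := hvinj i (i+1) (by omega) (by omega) hh; omega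
                  have d2 : v i ≠ v 0 := fun hh => by
                    have := hvinj i 0 (by omega) (by omega) hh; omega
                  have d3 : v i ≠ v (k-1) := fun hh => by
                    have := hvinj i (k-1) (by omega) (by omega) hh; omega
                  have d4 : v (i+1) ≠ v 0 := fun hh => by
                    have := hvinj (i+1) 0 (by omega) (by omega) hh; omega
                  have d5 : v (i+1) ≠ v (k-1) := fun hh => by
                    have := hvinj (i+1) (k-1) (by omega) (by omega) hh; omega
                  have d6 : v 0 ≠ v (k-1) := fun hh => by
                    have := hvinj 0 (k-1) (by omega) (by omega) hh; omega
                  rw [Finset.card_insert_of_notMem (by simp [d1, d2, d3]),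
                    Finset.card_insert_of_notMem (by simp [d4, d5]),
                    Finset.card_insert_of_notMem (by simp [d6]),
                    Finset.card_singleton]
                have := Finset.card_le_card hsub
                omega
          refine ⟨fun i => if i = 0 then v (k-1) else if i = k then u else v (i-1),
            fun i => if i = 0 then e else h (i-1), ?_, ?_, ?_, ?_⟩
          · intro i j hi hj hij
            by_cases hi0 : i = 0 <;> by_cases hj0 : j = 0
            · omega
            · by_cases hjk : j = k
              · simp [hi0, hj0, hjk, show k ≠ 0 by omega] at hij
                first
                | exact absurd hij (hune (k-1) (by omega))
                | exact absurd hij.symm (hune (k-1) (by omega))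
              · simp [hi0, hj0, hjk] at hij
                first
                | (have := hvinj (k-1) (j-1) (by omega) (by omega) hij; omega)
                | (have := hvinj (k-1) (j-1) (by omega) (by omega) hij.symm; omega)
            · by_cases hik : i = k
              · simp [hi0, hj0, hik, show k ≠ 0 by omega] at hij
                first
                | exact absurd hij (hune (k-1) (by omega))
                | exact absurd hij.symm (hune (k-1) (by omega))
              · simp [hi0, hj0, hik] at hij
                first
                | (have := hvinj (i-1) (k-1) (by omega) (by omega) hij; omega)
                | (have := hvinj (i-1) (k-1) (by omega) (by omega) hij.symm; omega)
            · by_cases hik : i = k <;> by_cases hjk : j = k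
              · omega
              · simp [hi0, hj0, hik, hjk, show k ≠ 0 by omega] at hij
                first
                | exact absurd hij (hune (j-1) (by omega))
                | exact absurd hij.symm (hune (j-1) (by omega))
              · simp [hi0, hj0, hik, hjk, show k ≠ 0 by omega] at hij
                first
                | exact absurd hij (hune (i-1) (by omega))
                | exact absurd hij.symm (hune (i-1) (by omega))
              · simp [hi0, hj0, hik, hjk] at hij
                first
                | (have := hvinj (i-1) (j-1) (by omega) (by omega) hij; omega)
                | (have := hvinj (i-1) (j-1) (by omega) (by omega) hij.symm; omega)
          · intro i j hi hj hij
            simp only [Nat.add_sub_cancel] at hi hj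
            by_cases hi0 : i = 0 <;> by_cases hj0 : j = 0
            · omega
            · simp [hi0, hj0] at hij
              first | exact absurd hij (hefresh (j-1) (by omega)) | exact absurd hij.symm (hefresh (j-1) (by omega))
            · simp [hi0, hj0] at hij
              first | exact absurd hij (hefresh (i-1) (by omega)) | exact absurd hij.symm (hefresh (i-1) (by omega))
            · simp [hi0, hj0] at hij
              have := hhinj (i-1) (j-1) (by omega) (by omega) hij; omega
          · intro i hi
            by_cases hi0 : i = 0
            · simp [hi0, hvS (k-1) (by omega)]
            · by_cases hik : i = k
              · simp [hi0, hik, show k ≠ 0 by omega, huS]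
              · simp [hi0, hik, hvS (i-1) (by omega)]
          · intro i hi
            simp only [Nat.add_sub_cancel] at hi
            by_cases hi0 : i = 0
            · subst hi0
              simp [show (0:ℕ) + 1 ≠ 0 by omega, show 1 ≠ k by omega, heE]
              exact ⟨hvke, hv0e⟩
            · have hcnd := hcond (i-1) (by omega)
              refine ⟨?_, ?_, ?_⟩
              · simp only [if_neg hi0]; exact hcnd.1
              · simp only [if_neg hi0, if_neg (show i ≠ k by omega)]; exact hcnd.2.1
              · by_cases hik1 : i + 1 = k
                · simp only [if_neg hi0, if_neg (show i + 1 ≠ 0 by omega), if_pos hik1]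
                  rw [show i - 1 = k - 2 by omega, hlast]
                  simp
                · simp only [if_neg hi0, if_neg (show i + 1 ≠ 0 by omega), if_neg hik1]
                  rw [show i + 1 - 1 = i - 1 + 1 by omega]
                  exact hcnd.2.2




lemma decomp (E : Finset (Finset V)) (i j : V) (hij : ∀ e ∈ E, ¬(i ∈ e ∧ j ∈ e))
    (w : V → ℝ) :
    ∑ e ∈ E, ∏ l ∈ e, w l
      = (∑ e ∈ E.filter (fun e => i ∈ e), ∏ l ∈ e, w l)
        + (∑ e ∈ E.filter (fun e => j ∈ e), ∏ l ∈ e, w l)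
        + (∑ e ∈ E.filter (fun e => i ∉ e ∧ j ∉ e), ∏ l ∈ e, w l) := by
  rw [← Finset.sum_filter_add_sum_filter_not E (fun e => i ∈ e) (fun e => ∏ l ∈ e, w l)]
  rw [← Finset.sum_filter_add_sum_filter_not (E.filter (fun e => i ∉ e)) (fun e => j ∈ e)
    (fun e => ∏ l ∈ e, w l)]
  have h1 : (E.filter (fun e => i ∉ e)).filter (fun e => j ∈ e)
      = E.filter (fun e => j ∈ e) := by
    ext e
    simp only [Finset.mem_filter]
    constructor
    · rintro ⟨⟨he, _⟩, hj⟩; exact ⟨he, hj⟩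
    · rintro ⟨he, hj⟩
      exact ⟨⟨he, fun hi => hij e he ⟨hi, hj⟩⟩, hj⟩
  have h2 : (E.filter (fun e => i ∉ e)).filter (fun e => ¬ j ∈ e)
      = E.filter (fun e => i ∉ e ∧ j ∉ e) := by
    rw [Finset.filter_filter]
  rw [h1, h2]
  ring

end auxiliary

/-- For `n ≥ t ≥ 4`, every 3-uniform hypergraph on `n` vertices with no Berge
path with `t` base vertices has Lagrangian at most `C(t-1, 3) / (t-1)^3`. -/
theorem lagrangian_berge_path_free_three_uniform (t n : ℕ) (ht : 4 ≤ t) (hn : t ≤ n)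
    (E : Finset (Finset (Fin n))) (hunif : ∀ e ∈ E, e.card = 3)
    (hfree : ¬ HasBergePath E t) :
    ∀ x : Fin n → ℝ, (∀ i, 0 ≤ x i) → ∑ i, x i = 1 →
      polyForm E x ≤ (Nat.choose (t - 1) 3 : ℝ) / ((t - 1 : ℕ) : ℝ) ^ 3 := by
  suffices H : ∀ m : ℕ, ∀ x : Fin n → ℝ, (∀ i, 0 ≤ x i) → ∑ i, x i = 1 →
      (Finset.univ.filter (fun i => x i ≠ 0)).card ≤ m →
      polyForm E x ≤ (Nat.choose (t - 1) 3 : ℝ) / ((t - 1 : ℕ) : ℝ) ^ 3 by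
    intro x hx hsum
    exact H n x hx hsum (le_trans (Finset.card_le_card (Finset.filter_subset _ _)) (by simp))
  intro m
  induction m with
  | zero =>
    intro x hx hsum hcard
    exfalso
    have hall : ∀ i, x i = 0 := by
      intro i
      by_contra hne
      have hmem : i ∈ Finset.univ.filter (fun i => x i ≠ 0) := by
        simp [hne]
      have hemp : Finset.univ.filter (fun i : Fin n => x i ≠ 0) = ∅ :=
        Finset.card_eq_zero.1 (Nat.le_zero.1 hcard)
      rw [hemp] at hmem
      exact absurd hmem (Finset.notMem_empty i)
    rw [Finset.sum_congr rfl (fun i _ => hall i)] at hsum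
    simp at hsum
  | succ m IH =>
    intro x hx hsum hcard
    by_cases Hpair : ∃ i j : Fin n, x i ≠ 0 ∧ x j ≠ 0 ∧ i ≠ j ∧ ∀ e ∈ E, i ∈ e → j ∉ e
    · -- shift weight between an uncovered pair
      have key : ∀ i j : Fin n, x i ≠ 0 → x j ≠ 0 → i ≠ j →
          (∀ e ∈ E, ¬(i ∈ e ∧ j ∈ e)) →
          (∑ e ∈ E.filter (fun e => j ∈ e), ∏ l ∈ e.erase j, x l)
            ≤ (∑ e ∈ E.filter (fun e => i ∈ e), ∏ l ∈ e.erase i, x l) →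
          polyForm E x ≤ (Nat.choose (t - 1) 3 : ℝ) / ((t - 1 : ℕ) : ℝ) ^ 3 := by
        intro i j hxi hxj hijne hnoe hBA
        set y : Fin n → ℝ := fun l => if l = i then x i + x j else if l = j then 0 else x l
          with hy
        have hyi : y i = x i + x j := by simp [hy]
        have hyj : y j = 0 := by simp [hy, hijne.symm, Ne.symm hijne]
        have hyl : ∀ l, l ≠ i → l ≠ j → y l = x l := by
          intro l h1 h2; simp [hy, h1, h2]
        have hy0 : ∀ l, 0 ≤ y l := by
          intro l
          by_cases h1 : l = i
          · rw [h1, hyi]; exact add_nonneg (hx i) (hx j)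
          · by_cases h2 : l = j
            · rw [h2, hyj]
            · rw [hyl l h1 h2]; exact hx l
        have hysum : ∑ l, y l = 1 := by
          rw [← Finset.add_sum_erase _ y (Finset.mem_univ i),
            ← Finset.add_sum_erase _ y (Finset.mem_erase.2 ⟨Ne.symm hijne, Finset.mem_univ j⟩)]
          rw [← hsum, ← Finset.add_sum_erase _ x (Finset.mem_univ i),
            ← Finset.add_sum_erase _ x (Finset.mem_erase.2 ⟨Ne.symm hijne, Finset.mem_univ j⟩)]
          rw [hyi, hyj]
          have : ∑ l ∈ (Finset.univ.erase i).erase j, y l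
              = ∑ l ∈ (Finset.univ.erase i).erase j, x l := by
            refine Finset.sum_congr rfl fun l hl => ?_
            have h2 := Finset.mem_erase.1 hl
            have h1 := Finset.mem_erase.1 h2.2
            exact hyl l h1.1 h2.1
          rw [this]; ring
        have hycard : (Finset.univ.filter (fun l => y l ≠ 0)).card ≤ m := by
          have hsub : Finset.univ.filter (fun l => y l ≠ 0)
              ⊆ (Finset.univ.filter (fun l => x l ≠ 0)).erase j := by
            intro l hl
            have hyl0 : y l ≠ 0 := (Finset.mem_filter.1 hl).2
            by_cases h2 : l = j
            · rw [h2, hyj] at hyl0; exact absurd rfl hyl0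
            · refine Finset.mem_erase.2 ⟨h2, Finset.mem_filter.2 ⟨Finset.mem_univ l, ?_⟩⟩
              by_cases h1 : l = i
              · rw [h1]; exact hxi
              · rw [hyl l h1 h2] at hyl0; exact hyl0
          have hjmem : j ∈ Finset.univ.filter (fun l => x l ≠ 0) := by simp [hxj]
          calc (Finset.univ.filter (fun l => y l ≠ 0)).card
              ≤ ((Finset.univ.filter (fun l => x l ≠ 0)).erase j).card :=
                Finset.card_le_card hsub
            _ = (Finset.univ.filter (fun l => x l ≠ 0)).card - 1 :=
                Finset.card_erase_of_mem hjmem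
            _ ≤ m := by omega
        -- evaluate the three parts
        have hnoe' : ∀ e ∈ E, i ∈ e → j ∉ e := fun e he hi hj => hnoe e he ⟨hi, hj⟩
        have hPx : polyForm E x
            = x i * (∑ e ∈ E.filter (fun e => i ∈ e), ∏ l ∈ e.erase i, x l)
              + x j * (∑ e ∈ E.filter (fun e => j ∈ e), ∏ l ∈ e.erase j, x l)
              + (∑ e ∈ E.filter (fun e => i ∉ e ∧ j ∉ e), ∏ l ∈ e, x l) := by
          rw [polyForm, decomp E i j hnoe x, Finset.mul_sum, Finset.mul_sum]
          congr 1
          congr 1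
          · refine Finset.sum_congr rfl fun e he => ?_
            exact (Finset.mul_prod_erase e x (Finset.mem_filter.1 he).2).symm
          · refine Finset.sum_congr rfl fun e he => ?_
            exact (Finset.mul_prod_erase e x (Finset.mem_filter.1 he).2).symm
        have hPy : polyForm E y
            = (x i + x j) * (∑ e ∈ E.filter (fun e => i ∈ e), ∏ l ∈ e.erase i, x l)
              + (∑ e ∈ E.filter (fun e => i ∉ e ∧ j ∉ e), ∏ l ∈ e, x l) := by
          rw [polyForm, decomp E i j hnoe y, Finset.mul_sum]
          have part1 : ∀ e ∈ E.filter (fun e => i ∈ e),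
              ∏ l ∈ e, y l = (x i + x j) * ∏ l ∈ e.erase i, x l := by
            intro e he
            obtain ⟨heE, hie⟩ := Finset.mem_filter.1 he
            rw [← Finset.mul_prod_erase e y hie, hyi]
            congr 1
            refine Finset.prod_congr rfl fun l hl => ?_
            obtain ⟨hli, hle⟩ := Finset.mem_erase.1 hl
            exact hyl l hli (fun hlj => hnoe' e heE hie (hlj ▸ hle))
          have part2 : ∀ e ∈ E.filter (fun e => j ∈ e), ∏ l ∈ e, y l = 0 := by
            intro e he
            exact Finset.prod_eq_zero (Finset.mem_filter.1 he).2 hyj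
          have part3 : ∀ e ∈ E.filter (fun e => i ∉ e ∧ j ∉ e),
              ∏ l ∈ e, y l = ∏ l ∈ e, x l := by
            intro e he
            obtain ⟨heE, hie, hje⟩ := Finset.mem_filter.1 he
            refine Finset.prod_congr rfl fun l hl => ?_
            exact hyl l (fun h => hie (h ▸ hl)) (fun h => hje (h ▸ hl))
          rw [Finset.sum_congr rfl part1, Finset.sum_congr rfl part2,
            Finset.sum_congr rfl part3]
          simp [Finset.mul_sum]
        have hxley : polyForm E x ≤ polyForm E y := by
          rw [hPx, hPy]
          have : x j * (∑ e ∈ E.filter (fun e => j ∈ e), ∏ l ∈ e.erase j, x l)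
              ≤ x j * (∑ e ∈ E.filter (fun e => i ∈ e), ∏ l ∈ e.erase i, x l) :=
            mul_le_mul_of_nonneg_left hBA (hx j)
          linarith
        exact le_trans hxley (IH y hy0 hysum hycard)
      obtain ⟨i, j, hxi, hxj, hijne, hnoe'⟩ := Hpair
      have hnoe : ∀ e ∈ E, ¬(i ∈ e ∧ j ∈ e) := fun e he ⟨h1, h2⟩ => hnoe' e he h1 h2
      have hnoe2 : ∀ e ∈ E, ¬(j ∈ e ∧ i ∈ e) := fun e he ⟨h1, h2⟩ => hnoe' e he h2 h1
      rcases le_total (∑ e ∈ E.filter (fun e => j ∈ e), ∏ l ∈ e.erase j, x l)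
          (∑ e ∈ E.filter (fun e => i ∈ e), ∏ l ∈ e.erase i, x l) with hBA | hAB
      · exact key i j hxi hxj hijne hnoe hBA
      · exact key j i hxj hxi (Ne.symm hijne) hnoe2 hAB
    · -- all pairs in the support are covered
      push_neg at Hpair
      set supp := Finset.univ.filter (fun i : Fin n => x i ≠ 0) with hsupp
      have hcov : ∀ a ∈ supp, ∀ b ∈ supp, a ≠ b → ∃ e ∈ E, a ∈ e ∧ b ∈ e := by
        intro a ha b hb hab
        have hxa := (Finset.mem_filter.1 ha).2
        have hxb := (Finset.mem_filter.1 hb).2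
        obtain ⟨e, he, hae, hbe⟩ := Hpair a b hxa hxb hab
        exact ⟨e, he, hae, hbe⟩
      have hsupple : supp.card ≤ t - 1 := by
        by_contra hbig
        push_neg at hbig
        have hS4 : 4 ≤ supp.card := by omega
        obtain ⟨v, h, hvinj, hhinj, hvS, hcond⟩ :=
          exists_long_path E hunif supp hcov hS4 t (by omega) (by omega)
        exact hfree ⟨fun i => v i.1, fun i => h i.1,
          fun i j hij => Fin.ext (hvinj i.1 j.1 i.2 j.2 hij),
          fun i j hij => Fin.ext (hhinj i.1 j.1 (by omega) (by omega) hij),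
          fun i => ⟨(hcond i.1 i.2).1, (hcond i.1 i.2).2.1, (hcond i.1 i.2).2.2⟩⟩
      obtain ⟨S, hsubS, hScard⟩ := Finset.exists_superset_card_eq
        (le_trans hsupple (le_refl _)) (by simpa using (by omega : t - 1 ≤ n))
      have hzero : ∀ l, l ∉ S → x l = 0 := by
        intro l hl
        by_contra hne
        exact hl (hsubS (Finset.mem_filter.2 ⟨Finset.mem_univ l, hne⟩))
      have hsumS : ∑ l ∈ S, x l = 1 := by
        rw [← hsum]
        exact Finset.sum_subset (Finset.subset_univ S) (fun l _ hl => hzero l hl)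
      have step1 : polyForm E x ≤ ∑ e ∈ S.powersetCard 3, ∏ l ∈ e, x l := by
        rw [polyForm, ← Finset.sum_filter_add_sum_filter_not E (fun e => e ⊆ S)
          (fun e => ∏ l ∈ e, x l)]
        have hz : ∑ e ∈ E.filter (fun e => ¬ e ⊆ S), ∏ l ∈ e, x l = 0 := by
          refine Finset.sum_eq_zero fun e he => ?_
          obtain ⟨heE, hns⟩ := Finset.mem_filter.1 he
          obtain ⟨l, hle, hlS⟩ := Finset.not_subset.1 hns
          exact Finset.prod_eq_zero hle (hzero l hlS)
        rw [hz, add_zero]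
        refine Finset.sum_le_sum_of_subset_of_nonneg ?_ ?_
        · intro e he
          obtain ⟨heE, hes⟩ := Finset.mem_filter.1 he
          exact Finset.mem_powersetCard.2 ⟨hes, hunif e heE⟩
        · intro e _ _
          exact Finset.prod_nonneg fun l _ => hx l
      have step2 := esymm3_le S x (t-1) (by omega) hScard (fun l _ => hx l) hsumS
      exact le_trans step1 step2
end

section
/- Let F be a k-uniform hypergraph on n vertices, and let x = (x_1,...,x_n) with x_i ≥ 0 for all i and Σ_{i=1}^n x_i = 1 be such that P_F(x) = λ(F), and suppose the support I = {i : x_i ≠ 0} is minimal among supports of such maximizing vectors. Then the induced subhypergraph F[I] is covering, i.e., every pair of distinct vertices of I is contained in some hyperedge of F that is a subset of I. -/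
/-!
Suppose `u, v` lie in the support of `x` but no edge containing both lies inside the support.
Then every edge through `u` and `v` has product zero at `x`, so `P` is affine along the segment
through `x` in direction `eᵤ - eᵥ`. Its two endpoints — all mass of `v` moved to `u`, and vice
versa — average to `x` with weights `x u`, `x v`; as neither exceeds the maximum `P(x)`, both
attain it. The first endpoint is then a maximizer with strictly smaller support.
-/

open Function Finset

section ShiftMass

variable {ι R : Type*} [DecidableEq ι]

def shiftMass [Add R] [Zero R] (x : ι → R) (u v : ι) : ι → R :=
  update (update x u (x u + x v)) v 0

@[simp]
theorem shiftMass_apply_right [Add R] [Zero R] (x : ι → R) (u v : ι) : shiftMass x u v v = 0 :=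
  update_self ..

theorem sum_shiftMass [Fintype ι] [AddCommMonoid R] (x : ι → R) {u v : ι} (huv : u ≠ v) :
    ∑ i, shiftMass x u v i = ∑ i, x i := by
  have hu : u ∈ univ.erase v := mem_erase.2 ⟨huv, mem_univ u⟩
  rw [shiftMass, sum_update_of_mem (mem_univ v), zero_add, sdiff_singleton_eq_erase,
    sum_update_of_mem hu, sdiff_singleton_eq_erase, ← add_sum_erase _ _ (mem_univ v),
    ← add_sum_erase _ _ hu, add_comm (x u), add_assoc]

theorem shiftMass_nonneg [AddZeroClass R] [Preorder R] [AddLeftMono R] {x : ι → R}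
    (hx : ∀ i, 0 ≤ x i) (u v i : ι) : 0 ≤ shiftMass x u v i := by
  rcases eq_or_ne i v with rfl | hiv
  · simp
  rw [shiftMass, update_of_ne hiv]
  rcases eq_or_ne i u with rfl | hiu
  · rw [update_self]; exact add_nonneg (hx i) (hx v)
  · rw [update_of_ne hiu]; exact hx i

theorem setOf_shiftMass_ne_zero_subset [Add R] [Zero R] {x : ι → R} {u : ι} (hu : x u ≠ 0)
    (v : ι) :
    {i | shiftMass x u v i ≠ 0} ⊆ {i | x i ≠ 0} := by
  intro i hi
  rcases eq_or_ne i u with rfl | hiu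
  · exact hu
  rcases eq_or_ne i v with rfl | hiv
  · exact absurd (shiftMass_apply_right x u i) hi
  · simpa only [Set.mem_ofPred_eq, shiftMass, update_of_ne hiv, update_of_ne hiu] using hi

section Prod

variable [CommSemiring R] (x : ι → R) {u v : ι} {e : Finset ι}

theorem prod_shiftMass_of_mem_right (hv : v ∈ e) : ∏ i ∈ e, shiftMass x u v i = 0 :=
  prod_eq_zero hv (shiftMass_apply_right x u v)

theorem prod_shiftMass_of_notMem (hu : u ∉ e) (hv : v ∉ e) :
    ∏ i ∈ e, shiftMass x u v i = ∏ i ∈ e, x i :=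
  prod_congr rfl fun i hi => by
    rw [shiftMass, update_of_ne (ne_of_mem_of_not_mem hi hv),
      update_of_ne (ne_of_mem_of_not_mem hi hu)]

theorem prod_shiftMass_of_mem_of_notMem (hu : u ∈ e) (hv : v ∉ e) :
    ∏ i ∈ e, shiftMass x u v i = (x u + x v) * ∏ i ∈ e.erase u, x i := by
  rw [← sdiff_singleton_eq_erase, ← prod_update_of_mem hu]
  exact prod_congr rfl fun i hi => update_of_ne (ne_of_mem_of_not_mem hi hv) ..

theorem mul_prod_shiftMass_add_swap (he : u ∈ e → v ∈ e → ∏ i ∈ e, x i = 0) :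
    x u * ∏ i ∈ e, shiftMass x u v i + x v * ∏ i ∈ e, shiftMass x v u i =
      (x u + x v) * ∏ i ∈ e, x i := by
  by_cases hu : u ∈ e <;> by_cases hv : v ∈ e
  · rw [prod_shiftMass_of_mem_right x hv, prod_shiftMass_of_mem_right x hu, he hu hv]
    simp
  · rw [prod_shiftMass_of_mem_of_notMem x hu hv,
      prod_shiftMass_of_mem_right x hu, ← mul_prod_erase e x hu]
    ring
  · rw [prod_shiftMass_of_mem_right x hv,
      prod_shiftMass_of_mem_of_notMem x hv hu, ← mul_prod_erase e x hv]
    ring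
  · rw [prod_shiftMass_of_notMem x hu hv, prod_shiftMass_of_notMem x hv hu, add_mul]

end Prod

end ShiftMass

theorem mul_polyForm_shiftMass_add_swap {n : ℕ} {E : Finset (Finset (Fin n))} (x : Fin n → ℝ)
    {u v : Fin n} (hE : ∀ e ∈ E, u ∈ e → v ∈ e → ∏ i ∈ e, x i = 0) :
    x u * polyForm E (shiftMass x u v) + x v * polyForm E (shiftMass x v u) =
      (x u + x v) * polyForm E x := by
  simp only [polyForm, mul_sum, ← sum_add_distrib]
  exact sum_congr rfl fun e he => mul_prod_shiftMass_add_swap x (hE e he)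

theorem induced_on_minimal_support_is_covering_general (n : ℕ)
    (E : Finset (Finset (Fin n)))
    (x : Fin n → ℝ) (hx0 : ∀ i, 0 ≤ x i) (hx1 : ∑ i, x i = 1)
    (hmax : ∀ y : Fin n → ℝ, (∀ i, 0 ≤ y i) → ∑ i, y i = 1 →
      polyForm E y ≤ polyForm E x)
    (hmin : ∀ y : Fin n → ℝ, (∀ i, 0 ≤ y i) → ∑ i, y i = 1 →
      polyForm E y = polyForm E x →
      {i | y i ≠ 0} ⊆ {i | x i ≠ 0} → {i | y i ≠ 0} = {i | x i ≠ 0}) :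
    ∀ u v : Fin n, u ≠ v → x u ≠ 0 → x v ≠ 0 →
      ∃ e ∈ E, u ∈ e ∧ v ∈ e ∧ ∀ w ∈ e, x w ≠ 0 := by
  intro u v huv hxu hxv
  by_contra! hcover
  have hE : ∀ e ∈ E, u ∈ e → v ∈ e → ∏ i ∈ e, x i = 0 := fun e he hu hv => by
    obtain ⟨w, hw, hxw⟩ := hcover e he hu hv
    exact prod_eq_zero hw hxw
  have hsum := sum_shiftMass x huv
  have hsum' := sum_shiftMass x huv.symm
  have hle := hmax _ (shiftMass_nonneg hx0 u v) (hsum.trans hx1)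
  have hle' := hmax _ (shiftMass_nonneg hx0 v u) (hsum'.trans hx1)
  have hpos : 0 < x u := (hx0 u).lt_of_ne' hxu
  have hpos' : 0 < x v := (hx0 v).lt_of_ne' hxv
  have hmaximizer : polyForm E (shiftMass x u v) = polyForm E x := by
    nlinarith [mul_polyForm_shiftMass_add_swap x hE]
  have hsupp := hmin _ (shiftMass_nonneg hx0 u v) (hsum.trans hx1) hmaximizer
    (setOf_shiftMass_ne_zero_subset hxu v)
  have hv : v ∈ {i | shiftMass x u v i ≠ 0} := hsupp ▸ hxv
  exact hv (shiftMass_apply_right x u v)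

/-- If `x` is a maximizer of the polynomial form of a `k`-uniform hypergraph
over the standard simplex whose support is minimal among supports of
maximizers, then the subhypergraph induced on the support of `x` is covering. -/
theorem induced_on_minimal_support_is_covering (n k : ℕ)
    (E : Finset (Finset (Fin n))) (hunif : ∀ e ∈ E, e.card = k)
    (x : Fin n → ℝ) (hx0 : ∀ i, 0 ≤ x i) (hx1 : ∑ i, x i = 1)
    (hmax : ∀ y : Fin n → ℝ, (∀ i, 0 ≤ y i) → ∑ i, y i = 1 →
      polyForm E y ≤ polyForm E x)
    (hmin : ∀ y : Fin n → ℝ, (∀ i, 0 ≤ y i) → ∑ i, y i = 1 →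
      polyForm E y = polyForm E x →
      {i | y i ≠ 0} ⊆ {i | x i ≠ 0} → {i | y i ≠ 0} = {i | x i ≠ 0}) :
    ∀ u v : Fin n, u ≠ v → x u ≠ 0 → x v ≠ 0 →
      ∃ e ∈ E, u ∈ e ∧ v ∈ e ∧ ∀ w ∈ e, x w ≠ 0 :=
  induced_on_minimal_support_is_covering_general n E x hx0 hx1 hmax hmin
end

section
/- For integers k ≥ 2 and n ≥ t−1 ≥ k, there exists a k-uniform hypergraph on n vertices (namely the complete k-graph K^k_{t−1} together with n−t+1 isolated vertices) that contains no Berge cycle of length t and no Berge path with t base vertices, and whose Lagrangian equals C(t−1,k)/(t−1)^k. -/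
section BergeAux
open Finset

variable {ι : Type*} [DecidableEq ι]

lemma berge_pair_reindex (U : Finset ι) (j : ℕ) (f : Finset ι → ι → ℝ) :
    ∑ T ∈ U.powersetCard (j+1), ∑ b ∈ T, f (T.erase b) b
      = ∑ S ∈ U.powersetCard j, ∑ b ∈ U \ S, f S b := by
  rw [Finset.sum_sigma', Finset.sum_sigma']
  refine Finset.sum_nbij' (fun p => ⟨p.1.erase p.2, p.2⟩)
    (fun p => ⟨insert p.2 p.1, p.2⟩) ?_ ?_ ?_ ?_ ?_
  · rintro ⟨T, b⟩ hp
    simp only [mem_sigma, mem_powersetCard] at hp ⊢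
    obtain ⟨⟨hTU, hTc⟩, hb⟩ := hp
    refine ⟨⟨(erase_subset _ _).trans hTU, ?_⟩, ?_⟩
    · rw [card_erase_of_mem hb, hTc]; rfl
    · exact mem_sdiff.2 ⟨hTU hb, notMem_erase _ _⟩
  · rintro ⟨S, b⟩ hp
    simp only [mem_sigma, mem_powersetCard, mem_sdiff] at hp ⊢
    obtain ⟨⟨hSU, hSc⟩, hbU, hbS⟩ := hp
    exact ⟨⟨insert_subset hbU hSU, by rw [card_insert_of_notMem hbS, hSc]⟩,
      mem_insert_self _ _⟩
  · rintro ⟨T, b⟩ hp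
    simp only [mem_sigma, mem_powersetCard] at hp
    have : insert b (T.erase b) = T := insert_erase hp.2
    simp [this]
  · rintro ⟨S, b⟩ hp
    simp only [mem_sigma, mem_powersetCard, mem_sdiff] at hp
    have : (insert b S).erase b = S := erase_insert hp.2.2
    simp [this]
  · rintro ⟨T, b⟩ hp; rfl

variable (x : ι → ℝ)

lemma berge_Qnonneg (U : Finset ι) (hx : ∀ i ∈ U, 0 ≤ x i) (j : ℕ) :
    0 ≤ ∑ T ∈ U.powersetCard j, ∏ i ∈ T, x i := by
  refine Finset.sum_nonneg fun T hT => Finset.prod_nonneg fun i hi => ?_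
  exact hx i ((mem_powersetCard.1 hT).1 hi)

lemma berge_lem1 (U : Finset ι) (j : ℕ) :
    ∑ S ∈ U.powersetCard j, ∑ b ∈ U \ S, x b * ∏ i ∈ S, x i
      = (j+1 : ℝ) * ∑ T ∈ U.powersetCard (j+1), ∏ i ∈ T, x i := by
  rw [← berge_pair_reindex U j (fun S b => x b * ∏ i ∈ S, x i), Finset.mul_sum]
  refine sum_congr rfl fun T hT => ?_
  rw [mem_powersetCard] at hT
  calc ∑ b ∈ T, x b * ∏ i ∈ T.erase b, x i = ∑ _b ∈ T, ∏ i ∈ T, x i :=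
        sum_congr rfl fun b hb => Finset.mul_prod_erase T x hb
    _ = (j+1 : ℝ) * ∏ i ∈ T, x i := by
        rw [sum_const, hT.2, nsmul_eq_mul]; push_cast; ring

lemma berge_lem2 (U : Finset ι) (hx : ∀ i ∈ U, 0 ≤ x i) (j : ℕ) :
    (j : ℝ) * (j+1) * ∑ T ∈ U.powersetCard (j+1), ∏ i ∈ T, x i
      ≤ ((U.card - j : ℕ) : ℝ) *
        ∑ S ∈ U.powersetCard j, (∑ a ∈ S, x a) * ∏ i ∈ S, x i := by
  have key : ((U.card - j : ℕ) : ℝ) *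
      ∑ S ∈ U.powersetCard j, (∑ a ∈ S, x a) * ∏ i ∈ S, x i
      = ∑ T ∈ U.powersetCard (j+1), ∑ b ∈ T,
          (∑ a ∈ (T.erase b), x a) * ∏ i ∈ T.erase b, x i := by
    rw [berge_pair_reindex U j (fun S _b => (∑ a ∈ S, x a) * ∏ i ∈ S, x i),
      Finset.mul_sum]
    refine sum_congr rfl fun S hS => ?_
    rw [mem_powersetCard] at hS
    rw [sum_const, card_sdiff_of_subset hS.1, hS.2, nsmul_eq_mul]
  rw [key, Finset.mul_sum]
  refine Finset.sum_le_sum fun T hT => ?_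
  rw [mem_powersetCard] at hT
  have hxT : ∀ i ∈ T, 0 ≤ x i := fun i hi => hx i (hT.1 hi)
  have hgsym : ∑ b ∈ T, ∑ a ∈ T.erase b, x a * ∏ i ∈ T.erase b, x i
      = ∑ a ∈ T, ∑ b ∈ T.erase a, x a * ∏ i ∈ T.erase b, x i := by
    refine Finset.sum_comm' ?_
    intro a b; simp only [mem_erase]; tauto
  have hgsym2 : ∑ a ∈ T, ∑ b ∈ T.erase a, x b * ∏ i ∈ T.erase a, x i
      = ∑ a ∈ T, ∑ b ∈ T.erase a, x a * ∏ i ∈ T.erase b, x i := by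
    refine Finset.sum_comm' ?_
    intro a b; simp only [mem_erase]; tauto
  have hpt : ∀ a ∈ T, ∀ b ∈ T.erase a,
      2 * ∏ i ∈ T, x i ≤ x a * ∏ i ∈ T.erase b, x i
        + x b * ∏ i ∈ T.erase a, x i := by
    intro a ha b hb
    have hab : a ≠ b := fun h => (mem_erase.1 hb).1 h.symm
    have hbT : b ∈ T := (mem_erase.1 hb).2
    set P : ℝ := ∏ i ∈ (T.erase a).erase b, x i with hP
    have hPn : 0 ≤ P := Finset.prod_nonneg fun i hi =>
      hxT i (mem_of_mem_erase (mem_of_mem_erase hi))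
    have h1 : ∏ i ∈ T, x i = x a * (x b * P) := by
      rw [← Finset.mul_prod_erase T x ha, ← Finset.mul_prod_erase (T.erase a) x hb]
    have h2 : ∏ i ∈ T.erase a, x i = x b * P := by
      rw [← Finset.mul_prod_erase (T.erase a) x hb]
    have h3 : ∏ i ∈ T.erase b, x i = x a * P := by
      have hcomm : (T.erase b).erase a = (T.erase a).erase b := by
        ext i; simp only [mem_erase]; tauto
      rw [← Finset.mul_prod_erase (T.erase b) x (mem_erase.2 ⟨hab, ha⟩), hP, hcomm]
    rw [h1, h2, h3]
    nlinarith [sq_nonneg (x a - x b), hPn, hxT a ha, hxT b hbT]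
  have hconst : (j : ℝ) * (j+1) * ∏ i ∈ T, x i
      = ∑ a ∈ T, ∑ b ∈ T.erase a, ∏ i ∈ T, x i := by
    rw [Finset.sum_congr rfl (fun a ha => sum_const (∏ i ∈ T, x i)),
      Finset.sum_congr rfl (fun a ha => by
        rw [card_erase_of_mem ha, hT.2, nsmul_eq_mul]),
      sum_const, hT.2, nsmul_eq_mul]
    push_cast; ring
  have main : 2 * ((j : ℝ) * (j+1) * ∏ i ∈ T, x i)
      ≤ 2 * ∑ b ∈ T, (∑ a ∈ T.erase b, x a) * ∏ i ∈ T.erase b, x i := by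
    simp only [Finset.sum_mul]
    rw [hgsym]
    calc 2 * ((j : ℝ) * (j+1) * ∏ i ∈ T, x i)
        = ∑ a ∈ T, ∑ b ∈ T.erase a, 2 * ∏ i ∈ T, x i := by
          rw [hconst, Finset.mul_sum]; exact congrArg _ (funext fun _ => by
            rw [Finset.mul_sum])
      _ ≤ ∑ a ∈ T, ∑ b ∈ T.erase a,
            (x a * ∏ i ∈ T.erase b, x i + x b * ∏ i ∈ T.erase a, x i) := by
          refine Finset.sum_le_sum fun a ha => Finset.sum_le_sum fun b hb =>
            hpt a ha b hb
      _ = 2 * ∑ a ∈ T, ∑ b ∈ T.erase a, x a * ∏ i ∈ T.erase b, x i := by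
          rw [Finset.sum_congr rfl (fun a _ => Finset.sum_add_distrib),
            Finset.sum_add_distrib, hgsym2]
          ring
  linarith [main]

lemma berge_lem3 (U : Finset ι) (hx : ∀ i ∈ U, 0 ≤ x i) (j : ℕ) :
    (U.card : ℝ) * (j+1) * ∑ T ∈ U.powersetCard (j+1), ∏ i ∈ T, x i
      ≤ ((U.card - j : ℕ) : ℝ) * (∑ i ∈ U, x i) *
        ∑ S ∈ U.powersetCard j, ∏ i ∈ S, x i := by
  have split : (∑ i ∈ U, x i) * ∑ S ∈ U.powersetCard j, ∏ i ∈ S, x i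
      = (j+1 : ℝ) * (∑ T ∈ U.powersetCard (j+1), ∏ i ∈ T, x i)
        + ∑ S ∈ U.powersetCard j, (∑ a ∈ S, x a) * ∏ i ∈ S, x i := by
    rw [← berge_lem1 x U j, Finset.mul_sum, ← Finset.sum_add_distrib]
    refine sum_congr rfl fun S hS => ?_
    rw [mem_powersetCard] at hS
    rw [← Finset.sum_mul, ← add_mul, Finset.sum_sdiff hS.1]
  have h2 := berge_lem2 x U hx j
  have hQ1 := berge_Qnonneg x U hx (j+1)
  rcases le_or_gt j U.card with hj | hj
  · have hcast : (U.card : ℝ) = ((U.card - j : ℕ) : ℝ) + j := by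
      push_cast [Nat.cast_sub hj]; ring
    have hr : ((U.card - j : ℕ) : ℝ) * (∑ i ∈ U, x i) *
        (∑ S ∈ U.powersetCard j, ∏ i ∈ S, x i)
        = ((U.card - j : ℕ) : ℝ) *
          ((j+1 : ℝ) * (∑ T ∈ U.powersetCard (j+1), ∏ i ∈ T, x i)
            + ∑ S ∈ U.powersetCard j, (∑ a ∈ S, x a) * ∏ i ∈ S, x i) := by
      rw [mul_assoc, split]
    rw [hr, hcast]
    nlinarith [h2, hQ1, Nat.cast_nonneg (α := ℝ) (U.card - j)]
  · have he : U.powersetCard (j+1) = ∅ := by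
      rw [Finset.powersetCard_eq_empty]; omega
    have hz : U.card - j = 0 := by omega
    simp [he, hz]

lemma berge_maclaurin (U : Finset ι) (hx : ∀ i ∈ U, 0 ≤ x i) (k : ℕ) :
    (∑ T ∈ U.powersetCard k, ∏ i ∈ T, x i) * (U.card : ℝ) ^ k
      ≤ (U.card.choose k : ℝ) * (∑ i ∈ U, x i) ^ k := by
  induction k with
  | zero => simp
  | succ k ih =>
    have hs : 0 ≤ ∑ i ∈ U, x i := Finset.sum_nonneg hx
    have h3 := berge_lem3 x U hx k
    have hQk := berge_Qnonneg x U hx k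
    have step : (∑ T ∈ U.powersetCard (k+1), ∏ i ∈ T, x i)
        * (U.card : ℝ) ^ (k+1) * (k+1)
        ≤ ((U.card - k : ℕ) : ℝ) * (∑ i ∈ U, x i)
          * ((U.card.choose k : ℝ) * (∑ i ∈ U, x i) ^ k) := by
      calc (∑ T ∈ U.powersetCard (k+1), ∏ i ∈ T, x i)
            * (U.card : ℝ) ^ (k+1) * (k+1)
          = ((U.card : ℝ) * (k+1)
              * ∑ T ∈ U.powersetCard (k+1), ∏ i ∈ T, x i) * (U.card : ℝ) ^ k := by
            ring
        _ ≤ (((U.card - k : ℕ) : ℝ) * (∑ i ∈ U, x i)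
              * ∑ S ∈ U.powersetCard k, ∏ i ∈ S, x i) * (U.card : ℝ) ^ k := by
            refine mul_le_mul_of_nonneg_right h3 (by positivity)
        _ = ((U.card - k : ℕ) : ℝ) * (∑ i ∈ U, x i)
              * ((∑ S ∈ U.powersetCard k, ∏ i ∈ S, x i) * (U.card : ℝ) ^ k) := by
            ring
        _ ≤ _ := by
            refine mul_le_mul_of_nonneg_left ih ?_
            positivity
    have hch : ((U.card.choose (k+1) : ℕ) : ℝ) * ((k : ℝ)+1)
        = ((U.card - k : ℕ) : ℝ) * (U.card.choose k : ℝ) := by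
      rw [mul_comm (((U.card - k : ℕ) : ℝ))]
      exact_mod_cast Nat.choose_succ_right_eq U.card k
    have final : (∑ T ∈ U.powersetCard (k+1), ∏ i ∈ T, x i)
        * (U.card : ℝ) ^ (k+1) * (k+1)
        ≤ (U.card.choose (k+1) : ℝ) * (∑ i ∈ U, x i) ^ (k+1) * (k+1) := by
      calc _ ≤ ((U.card - k : ℕ) : ℝ) * (∑ i ∈ U, x i)
              * ((U.card.choose k : ℝ) * (∑ i ∈ U, x i) ^ k) := step
        _ = (((U.card - k : ℕ) : ℝ) * (U.card.choose k : ℝ))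
              * (∑ i ∈ U, x i) ^ (k+1) := by ring
        _ = (U.card.choose (k+1) : ℝ) * (∑ i ∈ U, x i) ^ (k+1) * (k+1) := by
            rw [← hch]; ring
    have hk1 : (0:ℝ) < (k+1 : ℝ) := by positivity
    exact le_of_mul_le_mul_right final hk1

end BergeAux

/-- For `k ≥ 2` and `n ≥ t - 1 ≥ k`, the complete `k`-uniform hypergraph on
`t - 1` vertices together with `n - t + 1` isolated vertices is a `k`-uniform
hypergraph on `n` vertices with no Berge cycle of length `t`, no Berge path
with `t` base vertices, and Lagrangian exactly `C(t-1,k) / (t-1)^k`. -/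
theorem extremal_construction_berge_free (k t n : ℕ) (hk : 2 ≤ k)
    (hkt : k ≤ t - 1) (htn : t - 1 ≤ n) :
    ∃ E : Finset (Finset (Fin n)),
      E = Finset.powersetCard k
            (Finset.univ.filter (fun i : Fin n => (i : ℕ) < t - 1)) ∧
      (∀ e ∈ E, e.card = k) ∧
      ¬ HasBergeCycle E t ∧
      ¬ HasBergePath E t ∧
      IsGreatest {y : ℝ | ∃ x : Fin n → ℝ, (∀ i, 0 ≤ x i) ∧ (∑ i, x i = 1) ∧
          y = polyForm E x}
        ((Nat.choose (t - 1) k : ℝ) / ((t - 1 : ℕ) : ℝ) ^ k) := by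
  classical
  have ht3 : 3 ≤ t := by omega
  set U : Finset (Fin n) := Finset.univ.filter (fun i : Fin n => (i : ℕ) < t - 1)
    with hUdef
  refine ⟨U.powersetCard k, rfl, ?_, ?_, ?_, ?_, ?_⟩
  · intro e he; exact (Finset.mem_powersetCard.1 he).2
  -- cardinality of U
  all_goals
    have hUcard : U.card = t - 1 := by
      have hc := Finset.card_bij' (s := U) (t := Finset.range (t-1))
        (fun a _ => (a : ℕ))
        (fun b hb => (⟨b, lt_of_lt_of_le (Finset.mem_range.1 hb) htn⟩ : Fin n))
        (fun a ha => Finset.mem_range.2 (Finset.mem_filter.1 ha).2)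
        (fun b hb => Finset.mem_filter.2 ⟨Finset.mem_univ _, Finset.mem_range.1 hb⟩)
        (fun a ha => Fin.ext rfl) (fun b hb => rfl)
      rw [hc, Finset.card_range]
  all_goals
    have hvert : ∀ {m : ℕ} (v : Fin m → Fin n), Function.Injective v →
        (∀ i, v i ∈ U) → m ≤ t - 1 := by
      intro m v hv hvU
      have h1 : (Finset.univ.image v).card = m := by
        rw [Finset.card_image_of_injective _ hv, Finset.card_univ, Fintype.card_fin]
      have h2 : Finset.univ.image v ⊆ U := by
        intro a ha
        obtain ⟨i, _, rfl⟩ := Finset.mem_image.1 ha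
        exact hvU i
      have := Finset.card_le_card h2
      omega
  · -- no Berge cycle
    rintro ⟨v, h, hv, hh, H⟩
    have : t ≤ t - 1 := by
      refine hvert v hv fun i => ?_
      exact (Finset.mem_powersetCard.1 (H i).1).1 (H i).2.1
    omega
  · -- no Berge path
    rintro ⟨v, h, hv, hh, H⟩
    have : t ≤ t - 1 := by
      refine hvert v hv fun i => ?_
      rcases lt_or_ge i.1 (t-1) with hi | hi
      · have := (H ⟨i.1, hi⟩).2.1
        have hmem := (Finset.mem_powersetCard.1 (H ⟨i.1, hi⟩).1).1 this
        convert hmem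
      · have hit : i.1 = t - 1 := by have := i.2; omega
        have hlt : t - 2 < t - 1 := by omega
        have := (H ⟨t-2, hlt⟩).2.2
        have hmem := (Finset.mem_powersetCard.1 (H ⟨t-2, hlt⟩).1).1 this
        have hi2 : (⟨t - 2 + 1, by omega⟩ : Fin t) = i := by
          apply Fin.ext; simp; omega
        rwa [hi2] at hmem
    omega
  · -- IsGreatest membership
    have hmpos : (0:ℝ) < ((t-1:ℕ):ℝ) := by exact_mod_cast (by omega : 0 < t - 1)
    refine ⟨fun i => if (i:ℕ) < t - 1 then (((t-1:ℕ):ℝ))⁻¹ else 0,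
      fun i => ?_, ?_, ?_⟩
    · dsimp only; split
      · positivity
      · exact le_rfl
    · rw [← Finset.sum_filter, ← hUdef, Finset.sum_const, hUcard, nsmul_eq_mul,
        mul_inv_cancel₀ (ne_of_gt hmpos)]
    · unfold polyForm
      have hprod : ∀ e ∈ U.powersetCard k,
          (∏ i ∈ e, (if (i:ℕ) < t-1 then (((t-1:ℕ):ℝ))⁻¹ else 0))
            = (((t-1:ℕ):ℝ))⁻¹ ^ k := by
        intro e he
        rw [Finset.mem_powersetCard] at he
        rw [Finset.prod_congr rfl
            (fun i hi => if_pos (Finset.mem_filter.1 (he.1 hi)).2),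
          Finset.prod_const, he.2]
      rw [Finset.sum_congr rfl hprod, Finset.sum_const,
        Finset.card_powersetCard, hUcard, nsmul_eq_mul, inv_pow,
        div_eq_mul_inv]
  · -- upper bound
    rintro y ⟨x, hxn, hxs, rfl⟩
    have hpk : (0:ℝ) < ((t-1:ℕ):ℝ) ^ k := by
      have : (0:ℝ) < ((t-1:ℕ):ℝ) := by exact_mod_cast (by omega : 0 < t - 1)
      positivity
    have hs0 : 0 ≤ ∑ i ∈ U, x i := Finset.sum_nonneg fun i _ => hxn i
    have hs1 : ∑ i ∈ U, x i ≤ 1 := by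
      rw [← hxs]
      exact Finset.sum_le_sum_of_subset_of_nonneg (Finset.subset_univ U)
        (fun i _ _ => hxn i)
    have mac := berge_maclaurin x U (fun i _ => hxn i) k
    rw [hUcard] at mac
    have key : (∑ e ∈ U.powersetCard k, ∏ i ∈ e, x i) * ((t-1:ℕ):ℝ)^k
        ≤ (((t-1).choose k : ℕ) : ℝ) := by
      calc (∑ e ∈ U.powersetCard k, ∏ i ∈ e, x i) * ((t-1:ℕ):ℝ)^k
          ≤ (((t-1).choose k : ℕ) :ℝ) * (∑ i ∈ U, x i)^k := mac
        _ ≤ (((t-1).choose k : ℕ) :ℝ) * 1 := by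
            refine mul_le_mul_of_nonneg_left ?_ (Nat.cast_nonneg _)
            exact pow_le_one₀ hs0 hs1
        _ = _ := mul_one _
    unfold polyForm
    rw [le_div_iff₀ hpk]
    exact key
end
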